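/- arXiv:2412.17385 — 11 statements merged into one kernel-verified Lean document; each statement's English description precedes it below -/
import Mathlib

section
/- Let K be a complete non-archimedean nontrivially valued field which is not spherically complete, and let K^∨ be a spherically complete immediate extension of K. For x, y ∈ K^∨ \ K, if there exist λ, μ ∈ K with λ ≠ 0 such that |y - (λx + μ)| ≤ d(y, K), then |λ| = d(y,K)/d(x,K), where d(z,K) = inf_{a ∈ K} |z - a|. -/
open Metric

/-- A metric space is spherically complete if every nonempty chain of closed balls
has nonempty intersection. -/
def SphericallyComplete (X : Type*) [MetricSpace X] : Prop :=
  ∀ c : Set (Set X), c.Nonempty → (∀ s ∈ c, ∃ z r, s = Metric.closedBall z r) →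
    IsChain (· ⊆ ·) c → (⋂₀ c).Nonempty

private lemma le_infDist_aux {X : Type*} [MetricSpace X] {s : Set X} (hs : s.Nonempty)
    {x : X} {b : ℝ} (hb : ∀ z ∈ s, b ≤ dist x z) : b ≤ Metric.infDist x s := by
  by_contra hlt
  obtain ⟨z, hz, hzd⟩ := (Metric.infDist_lt_iff hs).mp (lt_of_not_ge hlt)
  exact absurd (hb z hz) (not_le.mpr hzd)

theorem stmt0 {K Kv : Type*} [NontriviallyNormedField K] [CompleteSpace K]
    [IsUltrametricDist K] [NormedField Kv] [IsUltrametricDist Kv] [Algebra K Kv]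
    (hiso : ∀ a : K, ‖algebraMap K Kv a‖ = ‖a‖)
    (hKns : ¬ SphericallyComplete K)
    (hsph : SphericallyComplete Kv)
    (himm : ∀ z : Kv, z ≠ 0 → ∃ a : K, ‖z - algebraMap K Kv a‖ < ‖z‖)
    (x y : Kv) (hx : x ∉ Set.range (algebraMap K Kv))
    (hy : y ∉ Set.range (algebraMap K Kv))
    (l m : K) (hl : l ≠ 0)
    (h : ‖y - (algebraMap K Kv l * x + algebraMap K Kv m)‖ ≤
      Metric.infDist y (Set.range (algebraMap K Kv))) :
    ‖l‖ = Metric.infDist y (Set.range (algebraMap K Kv)) /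
      Metric.infDist x (Set.range (algebraMap K Kv)) := by
  set f := algebraMap K Kv with hf
  set S := Set.range f with hS
  have hSne : S.Nonempty := ⟨f 0, 0, rfl⟩
  -- f is an isometry, so S is closed
  have hisom : Isometry f := by
    intro a b
    simp only [edist_dist, dist_eq_norm, ← map_sub, hiso]
  have hSclosed : IsClosed S := hisom.isClosedEmbedding.isClosed_range
  have hdx : 0 < infDist x S := (hSclosed.notMem_iff_infDist_pos hSne).mp hx
  have hl0 : (0:ℝ) < ‖l‖ := norm_pos_iff.mpr hl
  set w : Kv := f l * x + f m with hw
  -- the distance to S is never attained for y: infDist y S < ‖y - f a‖ always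
  have hstrict : ∀ a : K, infDist y S < ‖y - f a‖ := by
    intro a
    have hz : y - f a ≠ 0 := sub_ne_zero.mpr (fun hEq => hy ⟨a, hEq.symm⟩)
    obtain ⟨b, hb⟩ := himm _ hz
    calc infDist y S ≤ dist y (f (a + b)) := infDist_le_dist_of_mem ⟨a + b, rfl⟩
      _ = ‖y - f a - f b‖ := by rw [dist_eq_norm, map_add, sub_add_eq_sub_sub]
      _ < ‖y - f a‖ := hb
  -- key: ‖y - f a‖ = ‖w - f a‖ for all a
  have hkey1 : ∀ a : K, ‖y - f a‖ = ‖w - f a‖ := by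
    intro a
    have h1 : ‖y - w‖ < ‖y - f a‖ := lt_of_le_of_lt h (hstrict a)
    have h2 : w - f a = (y - f a) - (y - w) := by ring
    have h3 := IsUltrametricDist.norm_add_eq_max_of_norm_ne_norm
      (x := y - f a) (y := -(y - w)) (by rw [norm_neg]; exact h1.ne')
    rw [norm_neg, max_eq_left h1.le, ← sub_eq_add_neg] at h3
    rw [h2, h3]
  -- key: ‖w - f a‖ = ‖l‖ * ‖x - f ((a - m)/l)‖
  have hkey2 : ∀ a : K, ‖w - f a‖ = ‖l‖ * ‖x - f ((a - m)/l)‖ := by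
    intro a
    have h3 : w - f a = f l * (x - f ((a - m)/l)) := by
      rw [mul_sub, ← map_mul, mul_div_cancel₀ _ hl, hw, map_sub]
      ring
    rw [h3, norm_mul, hiso]
  have hkey : ∀ a : K, ‖y - f a‖ = ‖l‖ * ‖x - f ((a - m)/l)‖ := fun a =>
    (hkey1 a).trans (hkey2 a)
  -- infDist y S = ‖l‖ * infDist x S
  have hmain : infDist y S = ‖l‖ * infDist x S := by
    apply le_antisymm
    · rw [← div_le_iff₀' hl0]
      refine le_infDist_aux hSne ?_
      rintro z ⟨b, rfl⟩
      rw [div_le_iff₀' hl0, dist_eq_norm]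
      have : ‖y - f (l * b + m)‖ = ‖l‖ * ‖x - f ((l * b + m - m)/l)‖ := hkey _
      rw [add_sub_cancel_right, mul_div_cancel_left₀ _ hl] at this
      calc infDist y S ≤ dist y (f (l * b + m)) := infDist_le_dist_of_mem ⟨_, rfl⟩
        _ = ‖l‖ * ‖x - f b‖ := by rw [dist_eq_norm, this]
    · refine le_infDist_aux hSne ?_
      rintro z ⟨a, rfl⟩
      rw [dist_eq_norm, hkey a]
      have := infDist_le_dist_of_mem (x := x) (s := S) (y := f ((a - m)/l)) ⟨(a - m)/l, rfl⟩
      rw [dist_eq_norm] at this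
      exact mul_le_mul_of_nonneg_left this hl0.le
  rw [hmain, mul_div_cancel_right₀ _ hdx.ne']
end

section
/- Let K be a complete non-archimedean nontrivially valued field which is not spherically complete, K^∨ a spherically complete immediate extension, and let x, y ∈ K^∨ \ K. If z ∈ K^∨ satisfies |z − x| ≤ d(x,K) and x ~ y, then z ∈ K^∨ \ K and z ~ y, where u ~ v means there exist λ, μ ∈ K with |v − (λu + μ)| ≤ d(v,K). -/
open Metric

/-- The equivalence relation on `K^∨ \ K`: `x ~ y` iff there are `λ, μ ∈ K` with
`|y - (λx + μ)| ≤ d(y, K)`. -/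
def HoleEquiv (K : Type*) {Kv : Type*} [NormedField K] [NormedField Kv] [Algebra K Kv]
    (x y : Kv) : Prop :=
  ∃ l m : K, ‖y - (algebraMap K Kv l * x + algebraMap K Kv m)‖ ≤
    Metric.infDist y (Set.range (algebraMap K Kv))
theorem stmt4 {K Kv : Type*} [NontriviallyNormedField K] [CompleteSpace K]
    [IsUltrametricDist K] [NormedField Kv] [IsUltrametricDist Kv] [Algebra K Kv]
    (hiso : ∀ a : K, ‖algebraMap K Kv a‖ = ‖a‖)
    (hKns : ¬ SphericallyComplete K)
    (hsph : SphericallyComplete Kv)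
    (himm : ∀ z : Kv, z ≠ 0 → ∃ a : K, ‖z - algebraMap K Kv a‖ < ‖z‖)
    (x y : Kv) (hx : x ∉ Set.range (algebraMap K Kv))
    (hy : y ∉ Set.range (algebraMap K Kv))
    (z : Kv) (hz : ‖z - x‖ ≤ Metric.infDist x (Set.range (algebraMap K Kv)))
    (hxy : HoleEquiv K x y) :
    z ∉ Set.range (algebraMap K Kv) ∧ HoleEquiv K z y := by
  classical
  set S := Set.range (algebraMap K Kv) with hS
  have hSne : S.Nonempty := ⟨algebraMap K Kv 0, ⟨0, rfl⟩⟩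
  -- infDist is never attained
  have hnot : ∀ a : K, Metric.infDist x S < ‖x - algebraMap K Kv a‖ := by
    intro a
    have hne : x - algebraMap K Kv a ≠ 0 := by
      intro h
      exact hx ⟨a, (sub_eq_zero.mp h).symm⟩
    obtain ⟨b, hb⟩ := himm _ hne
    have hmem : algebraMap K Kv (a + b) ∈ S := ⟨a + b, rfl⟩
    have h1 : Metric.infDist x S ≤ ‖x - algebraMap K Kv (a + b)‖ := by
      simpa [dist_eq_norm] using Metric.infDist_le_dist_of_mem hmem
    calc Metric.infDist x S ≤ ‖x - algebraMap K Kv (a + b)‖ := h1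
      _ = ‖x - algebraMap K Kv a - algebraMap K Kv b‖ := by rw [map_add]; ring_nf
      _ < ‖x - algebraMap K Kv a‖ := hb
  have hznot : z ∉ S := by
    rintro ⟨c, rfl⟩
    have := hnot c
    rw [norm_sub_rev] at hz
    exact absurd (this.trans_le hz) (lt_irrefl _)
  refine ⟨hznot, ?_⟩
  obtain ⟨l, m, hlm⟩ := hxy
  set L := algebraMap K Kv l with hL
  set M := algebraMap K Kv m with hM
  set dx := Metric.infDist x S with hdx
  set dy := Metric.infDist y S with hdy
  -- key: ‖L‖ * dx ≤ dy
  have key : ‖L‖ * dx ≤ dy := by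
    rcases eq_or_ne l 0 with hl | hl
    · simp [hL, hl]
      exact Metric.infDist_nonneg
    · by_contra hcon
      push_neg at hcon
      obtain ⟨p, ⟨a, rfl⟩, hcon⟩ := (Metric.infDist_lt_iff hSne).mp hcon
      have hu : ‖y - (L * x + M)‖ < ‖L‖ * dx := lt_of_le_of_lt hlm (hcon.trans_le' (Metric.infDist_le_dist_of_mem ⟨a, rfl⟩))
      set w : Kv := algebraMap K Kv ((a - m) / l) with hw
      have hLne : L ≠ 0 := by
        rw [hL, Ne, map_eq_zero]
        exact hl
      have hv : L * x + M - algebraMap K Kv a = L * (x - w) := by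
        rw [hw, map_div₀, map_sub, ← hL, ← hM]
        field_simp
        ring
      have hvnorm : ‖L‖ * dx < ‖L * x + M - algebraMap K Kv a‖ := by
        rw [hv, norm_mul]
        exact mul_lt_mul_of_pos_left (hnot _) (norm_pos_iff.mpr hLne)
      have hsplit : L * x + M - algebraMap K Kv a
          = (y - algebraMap K Kv a) + -(y - (L * x + M)) := by ring
      have : ‖L * x + M - algebraMap K Kv a‖ < ‖L‖ * dx := by
        rw [hsplit]
        refine lt_of_le_of_lt (IsUltrametricDist.norm_add_le_max _ _) ?_
        rw [max_lt_iff, norm_neg]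
        refine ⟨?_, hu⟩
        rw [← dist_eq_norm]
        exact hcon
      exact absurd (hvnorm.trans this) (lt_irrefl _)
  refine ⟨l, m, ?_⟩
  have hsplit : y - (L * z + M) = (y - (L * x + M)) + L * (x - z) := by ring
  rw [← hL, ← hM, hsplit]
  refine le_trans (IsUltrametricDist.norm_add_le_max _ _) (max_le hlm ?_)
  rw [norm_mul, norm_sub_rev]
  calc ‖L‖ * ‖z - x‖ ≤ ‖L‖ * dx := by
        exact mul_le_mul_of_nonneg_left hz (norm_nonneg _)
    _ ≤ dy := key
end

section
/- Let K be a non-spherically complete, complete, algebraically closed non-archimedean valued field of characteristic p > 0, with spherically complete immediate extension K^∨. Let x ∈ K^∨ \ K with |x| = 1 and r = d(x,K). Then for all m ≥ 1, the quotient norm satisfies ‖π(x^{p^m})‖ ≤ r^{p^m} and d(x^{p^m}, span_K{1, x, ..., x^{p^{m-1}}}) ≥ r^{p^m}; consequently {π(x), π(x^p), π(x^{p^2}), ...} is an orthogonal subset of K^∨/K. -/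
open Metric

/-!
Write `r = d(x, K)`. Frobenius gives `(x - a) ^ p ^ m = x ^ p ^ m - a ^ p ^ m`, hence
`d(x ^ p ^ m, K) ≤ r ^ p ^ m`. Conversely, if `w` is a `K`-combination of `1, x, …, x ^ (N - 1)`,
then `x ^ N - w` is the value at `x` of a monic polynomial of degree `N`, which splits over the
algebraically closed field `K`; so `‖x ^ N - w‖` is a product of `N` factors `‖x - a‖ ≥ r`.
For `N = p ^ k` this says that `π (x ^ p ^ k)` has norm `r ^ p ^ k` and is at distance at least
`r ^ p ^ k` from the span of the earlier `π (x ^ p ^ j)` in the ultrametric space `K^∨ / K`,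
which makes the family orthogonal.
-/

instance QuotientAddGroup.isUltrametricDist {M : Type*} [SeminormedAddCommGroup M]
    [IsUltrametricDist M] (S : AddSubgroup M) : IsUltrametricDist (M ⧸ S) := by
  refine IsUltrametricDist.isUltrametricDist_of_forall_norm_add_le_max_norm fun x y => ?_
  refine le_of_forall_pos_lt_add fun ε hε => ?_
  obtain ⟨m, rfl, hm⟩ := QuotientAddGroup.exists_norm_mk_lt x hε
  obtain ⟨n, rfl, hn⟩ := QuotientAddGroup.exists_norm_mk_lt y hε
  calc ‖(m : M ⧸ S) + n‖ ≤ ‖m + n‖ := QuotientAddGroup.norm_mk_le_norm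
    _ ≤ max ‖m‖ ‖n‖ := IsUltrametricDist.norm_add_le_max m n
    _ < max ‖(m : M ⧸ S)‖ ‖(n : M ⧸ S)‖ + ε := by
      rw [← max_add_add_right]; exact max_lt_max hm hn

instance Submodule.Quotient.isUltrametricDist {R M : Type*} [Ring R] [SeminormedAddCommGroup M]
    [IsUltrametricDist M] [Module R M] (S : Submodule R M) : IsUltrametricDist (M ⧸ S) :=
  QuotientAddGroup.isUltrametricDist S.toAddSubgroup

section Orthogonal

variable {𝕜 F : Type*} [NormedField 𝕜] [SeminormedAddCommGroup F] [IsUltrametricDist F]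
  [NormedSpace 𝕜 F]

theorem IsUltrametricDist.max_norm_le_norm_add_smul {T : Submodule 𝕜 F} {v : F}
    (hv : ∀ w ∈ T, ‖v‖ ≤ ‖v - w‖) {w : F} (hw : w ∈ T) (c : 𝕜) :
    max ‖w‖ (‖c‖ * ‖v‖) ≤ ‖w + c • v‖ := by
  have hcv : ‖c‖ * ‖v‖ ≤ ‖w + c • v‖ := by
    rcases eq_or_ne c 0 with rfl | hc
    · simp
    calc ‖c‖ * ‖v‖ ≤ ‖c‖ * ‖v - (-c⁻¹) • w‖ :=
          mul_le_mul_of_nonneg_left (hv _ (T.smul_mem _ hw)) (norm_nonneg c)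
      _ = ‖w + c • v‖ := by
          rw [← norm_smul, smul_sub, smul_smul, mul_neg, mul_inv_cancel₀ hc, neg_one_smul,
            sub_neg_eq_add, add_comm]
  refine max_le ?_ hcv
  calc ‖w‖ = ‖(w + c • v) + -(c • v)‖ := by rw [add_neg_cancel_right]
    _ ≤ max ‖w + c • v‖ ‖-(c • v)‖ := IsUltrametricDist.norm_add_le_max _ _
    _ ≤ ‖w + c • v‖ := max_le le_rfl (by rwa [norm_neg, norm_smul])

variable {f : ℕ → F} (hf : ∀ k, ∀ w ∈ Submodule.span 𝕜 (f '' Set.Iio k), ‖f k‖ ≤ ‖f k - w‖)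
include hf

theorem IsUltrametricDist.norm_smul_le_norm_sum_smul {n : ℕ} (c : Fin n → 𝕜) (i : Fin n) :
    ‖c i‖ * ‖f i‖ ≤ ‖∑ j, c j • f j‖ := by
  induction n with
  | zero => exact i.elim0
  | succ n ih =>
    have hmem : ∑ j : Fin n, c j.castSucc • f j ∈ Submodule.span 𝕜 (f '' Set.Iio n) :=
      Submodule.sum_mem _ fun j _ =>
        Submodule.smul_mem _ _ (Submodule.subset_span ⟨j, j.isLt, rfl⟩)
    have hmax := max_norm_le_norm_add_smul (hf n) hmem (c (Fin.last n))
    rw [Fin.sum_univ_castSucc]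
    refine Fin.lastCases ((le_max_right _ _).trans hmax) (fun j => ?_) i
    exact (ih (fun j => c j.castSucc) j).trans ((le_max_left _ _).trans hmax)

theorem IsUltrametricDist.norm_sum_smul_eq_iSup {n : ℕ} (c : Fin n → 𝕜) :
    ‖∑ i, c i • f i‖ = ⨆ i, ‖c i‖ * ‖f i‖ := by
  refine le_antisymm ?_ (Real.iSup_le (norm_smul_le_norm_sum_smul hf c) (norm_nonneg _))
  refine IsUltrametricDist.norm_sum_le_of_forall_le_of_nonneg (s := Finset.univ)
    (Real.iSup_nonneg fun i => mul_nonneg (norm_nonneg _) (norm_nonneg _)) fun i _ => ?_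
  rw [norm_smul]
  exact le_ciSup (f := fun i => ‖c i‖ * ‖f i‖) (Finite.bddAbove_range _) i

end Orthogonal

section DistanceToBaseField

open Polynomial

variable {K L : Type*} [Field K] [NormedField L] [Algebra K L]

theorem pow_mem_span_pow (x : L) {i N : ℕ} (h : i < N) :
    x ^ i ∈ Submodule.span K (Set.range fun j : Fin N => x ^ (j : ℕ)) :=
  Submodule.subset_span ⟨⟨i, h⟩, rfl⟩

theorem infDist_pow_char_pow_le (p : ℕ) [Fact p.Prime] [CharP L p] (x : L) (m : ℕ) :
    infDist (x ^ p ^ m) (Set.range (algebraMap K L)) ≤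
      infDist x (Set.range (algebraMap K L)) ^ p ^ m := by
  have hq : (0 : ℝ) < (p ^ m : ℕ) := by exact_mod_cast pow_pos (Fact.out : p.Prime).pos m
  rw [← Real.rpow_natCast, ← Real.rpow_inv_le_iff_of_pos infDist_nonneg infDist_nonneg hq]
  refine (le_infDist ⟨_, Set.mem_range_self 0⟩).2 ?_
  rintro _ ⟨a, rfl⟩
  rw [Real.rpow_inv_le_iff_of_pos infDist_nonneg dist_nonneg hq, Real.rpow_natCast, dist_eq_norm,
    ← norm_pow, sub_pow_char_pow, ← map_pow]
  exact (infDist_le_dist_of_mem (Set.mem_range_self _)).trans_eq (dist_eq_norm _ _)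

theorem norm_mkQ_range_algebraMap (z : L) :
    ‖(LinearMap.range (Algebra.linearMap K L)).mkQ z‖ = infDist z (Set.range (algebraMap K L)) := by
  rw [← Algebra.coe_linearMap, ← LinearMap.coe_range]
  exact QuotientAddGroup.norm_mk z

variable [IsAlgClosed K]

theorem infDist_pow_natDegree_le_norm_aeval (x : L) {P : K[X]} (hP : P.Monic) :
    infDist x (Set.range (algebraMap K L)) ^ P.natDegree ≤ ‖aeval x P‖ := by
  have hsplit : P.Splits := IsAlgClosed.splits P
  have hfactor : aeval x P = (P.roots.map fun a => x - algebraMap K L a).prod := by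
    conv_lhs => rw [hsplit.eq_prod_roots_of_monic hP]
    simp [map_multiset_prod, Multiset.map_map]
  rw [← splits_iff_card_roots.mp hsplit, hfactor, ← normHom_apply, map_multiset_prod,
    Multiset.map_map, ← Multiset.prod_replicate, ← Multiset.map_const']
  refine Multiset.prod_map_le_prod_map₀ _ _ (fun _ _ => infDist_nonneg) fun a _ => ?_
  exact (infDist_le_dist_of_mem (Set.mem_range_self a)).trans_eq (dist_eq_norm _ _)

theorem infDist_pow_le_norm_pow_sub (x : L) {N : ℕ} {w : L}
    (hw : w ∈ Submodule.span K (Set.range fun j : Fin N => x ^ (j : ℕ))) :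
    infDist x (Set.range (algebraMap K L)) ^ N ≤ ‖x ^ N - w‖ := by
  obtain ⟨c, rfl⟩ := (Submodule.mem_span_range_iff_exists_fun K).1 hw
  have hlt := degree_sum_fin_lt c
  have hdeg : (X ^ N - ∑ i : Fin N, C (c i) * X ^ (i : ℕ)).natDegree = N :=
    natDegree_eq_of_degree_eq_some <|
      (degree_sub_eq_left_of_degree_lt (by rwa [degree_X_pow])).trans (degree_X_pow N)
  simpa [hdeg, Algebra.smul_def] using
    infDist_pow_natDegree_le_norm_aeval x (monic_X_pow_sub hlt)

theorem infDist_pow_le_infDist_pow_span (x : L) {M N : ℕ} (hMN : M ≤ N) :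
    infDist x (Set.range (algebraMap K L)) ^ N ≤
      infDist (x ^ N) (Submodule.span K (Set.range fun j : Fin M => x ^ (j : ℕ))) := by
  refine (le_infDist ⟨0, Submodule.zero_mem _⟩).2 fun w hw => ?_
  rw [dist_eq_norm]
  refine infDist_pow_le_norm_pow_sub x (Submodule.span_le.2 ?_ hw)
  rintro _ ⟨j, rfl⟩
  exact pow_mem_span_pow x (j.isLt.trans_le hMN)

theorem infDist_pow_le_infDist_pow_sub (x : L) {N : ℕ} (hN : 0 < N) {w : L}
    (hw : w ∈ Submodule.span K (Set.range fun j : Fin N => x ^ (j : ℕ))) :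
    infDist x (Set.range (algebraMap K L)) ^ N ≤
      infDist (x ^ N - w) (Set.range (algebraMap K L)) := by
  refine (le_infDist ⟨_, Set.mem_range_self 0⟩).2 ?_
  rintro _ ⟨a, rfl⟩
  have ha : algebraMap K L a ∈ Submodule.span K (Set.range fun j : Fin N => x ^ (j : ℕ)) := by
    simpa [Algebra.smul_def] using Submodule.smul_mem _ a (pow_mem_span_pow x hN)
  rw [dist_eq_norm, sub_sub]
  exact infDist_pow_le_norm_pow_sub x (Submodule.add_mem _ hw ha)

theorem infDist_pow_char_pow_eq (p : ℕ) [Fact p.Prime] [CharP L p] (x : L) (m : ℕ) :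
    infDist (x ^ p ^ m) (Set.range (algebraMap K L)) =
      infDist x (Set.range (algebraMap K L)) ^ p ^ m := by
  refine le_antisymm (infDist_pow_char_pow_le p x m) ?_
  simpa using infDist_pow_le_infDist_pow_sub x (pow_pos (Fact.out : p.Prime).pos m)
    (Submodule.zero_mem _)

theorem norm_mkQ_pow_char_pow_le_norm_sub (p : ℕ) [Fact p.Prime] [CharP L p] (x : L) (k : ℕ)
    {w : L ⧸ LinearMap.range (Algebra.linearMap K L)}
    (hw : w ∈ Submodule.span K
      ((fun i => (LinearMap.range (Algebra.linearMap K L)).mkQ (x ^ p ^ i)) '' Set.Iio k)) :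
    ‖(LinearMap.range (Algebra.linearMap K L)).mkQ (x ^ p ^ k)‖ ≤
      ‖(LinearMap.range (Algebra.linearMap K L)).mkQ (x ^ p ^ k) - w‖ := by
  have hp : 1 < p := (Fact.out : p.Prime).one_lt
  rw [← Set.image_image (f := fun i => x ^ p ^ i), Submodule.span_image] at hw
  obtain ⟨v, hv, rfl⟩ := Submodule.mem_map.1 hw
  rw [← map_sub, norm_mkQ_range_algebraMap, norm_mkQ_range_algebraMap,
    infDist_pow_char_pow_eq p x k]
  refine infDist_pow_le_infDist_pow_sub x (pow_pos (by omega) k) (Submodule.span_le.2 ?_ hv)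
  rintro _ ⟨i, hi, rfl⟩
  exact pow_mem_span_pow x (Nat.pow_lt_pow_right hp hi)

end DistanceToBaseField

theorem stmt6_general {K Kv : Type*} [NontriviallyNormedField K]
    [IsAlgClosed K] (p : ℕ) [Fact p.Prime] [CharP K p]
    [NormedField Kv] [IsUltrametricDist Kv] [Algebra K Kv]
    (hiso : ∀ a : K, ‖algebraMap K Kv a‖ = ‖a‖)
    (x : Kv) :
    (∀ m : ℕ, 1 ≤ m →
      Metric.infDist (x ^ p ^ m) (Set.range (algebraMap K Kv)) ≤
        Metric.infDist x (Set.range (algebraMap K Kv)) ^ p ^ m ∧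
      Metric.infDist x (Set.range (algebraMap K Kv)) ^ p ^ m ≤
        Metric.infDist (x ^ p ^ m)
          ((Submodule.span K (Set.range fun j : Fin (p ^ (m - 1) + 1) =>
            x ^ (j : ℕ)) : Submodule K Kv) : Set Kv)) ∧
    ∀ (n : ℕ) (c : Fin n → K),
      Metric.infDist (∑ i, algebraMap K Kv (c i) * x ^ p ^ (i : ℕ))
          (Set.range (algebraMap K Kv)) =
        ⨆ i : Fin n, ‖c i‖ *
          Metric.infDist (x ^ p ^ (i : ℕ)) (Set.range (algebraMap K Kv)) := by
  let _ : NormedSpace K Kv :=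
    { norm_smul_le := fun a v => by rw [Algebra.smul_def, norm_mul, hiso] }
  have _ : CharP Kv p := charP_of_injective_algebraMap (algebraMap K Kv).injective p
  refine ⟨fun m hm => ⟨infDist_pow_char_pow_le p x m,
    infDist_pow_le_infDist_pow_span x ?_⟩, fun n c => ?_⟩
  · have := Nat.pow_lt_pow_right (Fact.out : p.Prime).one_lt (Nat.sub_lt hm one_pos)
    omega
  simp_rw [← norm_mkQ_range_algebraMap, ← Algebra.smul_def, map_sum, map_smul]
  exact IsUltrametricDist.norm_sum_smul_eq_iSup
    (fun k _ => norm_mkQ_pow_char_pow_le_norm_sub p x k) c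

theorem stmt6 {K Kv : Type*} [NontriviallyNormedField K] [CompleteSpace K]
    [IsUltrametricDist K] [IsAlgClosed K] (p : ℕ) [Fact p.Prime] [CharP K p]
    [NormedField Kv] [IsUltrametricDist Kv] [Algebra K Kv]
    (hiso : ∀ a : K, ‖algebraMap K Kv a‖ = ‖a‖)
    (hKns : ¬ SphericallyComplete K)
    (hsph : SphericallyComplete Kv)
    (himm : ∀ z : Kv, z ≠ 0 → ∃ a : K, ‖z - algebraMap K Kv a‖ < ‖z‖)
    (x : Kv) (hx : x ∉ Set.range (algebraMap K Kv)) (hx1 : ‖x‖ = 1) :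
    (∀ m : ℕ, 1 ≤ m →
      Metric.infDist (x ^ p ^ m) (Set.range (algebraMap K Kv)) ≤
        Metric.infDist x (Set.range (algebraMap K Kv)) ^ p ^ m ∧
      Metric.infDist x (Set.range (algebraMap K Kv)) ^ p ^ m ≤
        Metric.infDist (x ^ p ^ m)
          ((Submodule.span K (Set.range fun j : Fin (p ^ (m - 1) + 1) =>
            x ^ (j : ℕ)) : Submodule K Kv) : Set Kv)) ∧
    ∀ (n : ℕ) (c : Fin n → K),
      Metric.infDist (∑ i, algebraMap K Kv (c i) * x ^ p ^ (i : ℕ))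
          (Set.range (algebraMap K Kv)) =
        ⨆ i : Fin n, ‖c i‖ *
          Metric.infDist (x ^ p ^ (i : ℕ)) (Set.range (algebraMap K Kv)) :=
  stmt6_general p hiso x
end

section
/- Let K be a complete non-archimedean nontrivially valued field which is not spherically complete, K^∨ a spherically complete immediate extension, x ∈ K^∨ \ K, t > 0, r = d(x,K), and let E = span_K{1, x} ⊆ K^∨ with norm ‖v‖ = t·|v|. Let e₁, e₂ ∈ E' be the dual basis of the basis x, 1 of E. Then ‖e₁‖ = 1/(tr), ‖e₂‖ = |x|/(tr), and for every nonzero λ ∈ K, ‖e₁ + λe₂‖ = |1 − λx|/(tr). In particular, the map E' → span_K{1,x} sending e₁ ↦ 1 and e₂ ↦ −x is a linear isometry onto span_K{1,x} equipped with the norm (1/(tr))·|·|. -/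
open Metric

theorem stmt7 {K Kv : Type*} [NontriviallyNormedField K] [CompleteSpace K]
    [IsUltrametricDist K] [NormedField Kv] [IsUltrametricDist Kv] [Algebra K Kv]
    (hiso : ∀ a : K, ‖algebraMap K Kv a‖ = ‖a‖)
    (hKns : ¬ SphericallyComplete K)
    (hsph : SphericallyComplete Kv)
    (himm : ∀ z : Kv, z ≠ 0 → ∃ a : K, ‖z - algebraMap K Kv a‖ < ‖z‖)
    (x : Kv) (hx : x ∉ Set.range (algebraMap K Kv))
    (t : ℝ) (ht : 0 < t)
    (r : ℝ) (hr : r = Metric.infDist x (Set.range (algebraMap K Kv)))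
    -- the operator norm of a functional on `E = span{1, x}` equipped with the norm `t‖·‖`
    (opNorm : (Submodule.span K {(1 : Kv), x} →ₗ[K] K) → ℝ)
    (hopNorm : ∀ f : Submodule.span K {(1 : Kv), x} →ₗ[K] K,
      opNorm f = sInf {C : ℝ | 0 ≤ C ∧
        ∀ v : Submodule.span K {(1 : Kv), x}, ‖f v‖ ≤ C * (t * ‖(v : Kv)‖)})
    (e₁ e₂ : Submodule.span K {(1 : Kv), x} →ₗ[K] K)
    (he₁x : e₁ ⟨x, Submodule.subset_span (by simp)⟩ = 1)
    (he₁1 : e₁ ⟨1, Submodule.subset_span (by simp)⟩ = 0)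
    (he₂x : e₂ ⟨x, Submodule.subset_span (by simp)⟩ = 0)
    (he₂1 : e₂ ⟨1, Submodule.subset_span (by simp)⟩ = 1) :
    opNorm e₁ = 1 / (t * r) ∧
    opNorm e₂ = ‖x‖ / (t * r) ∧
    (∀ l : K, l ≠ 0 →
      opNorm (e₁ + l • e₂) = ‖1 - algebraMap K Kv l * x‖ / (t * r)) ∧
    ∀ f : Submodule.span K {(1 : Kv), x} →ₗ[K] K,
      opNorm f = (1 / (t * r)) *
        ‖algebraMap K Kv (f ⟨x, Submodule.subset_span (by simp)⟩) -
          algebraMap K Kv (f ⟨1, Submodule.subset_span (by simp)⟩) * x‖ := by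
  have hrange_ne : (Set.range (algebraMap K Kv)).Nonempty := ⟨algebraMap K Kv 0, ⟨0, rfl⟩⟩
  have hisom : Isometry (algebraMap K Kv) := by
    apply Isometry.of_dist_eq
    intro a b
    rw [dist_eq_norm, dist_eq_norm, ← map_sub, hiso]
  have hclosed : IsClosed (Set.range (algebraMap K Kv)) :=
    hisom.isClosedEmbedding.isClosed_range
  have hr0 : 0 < r := by
    rw [hr]
    exact (hclosed.notMem_iff_infDist_pos hrange_ne).mp hx
  have htr : 0 < t * r := mul_pos ht hr0
  have hgt : ∀ c : K, r < ‖x - algebraMap K Kv c‖ := by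
    intro c
    have hle : r ≤ ‖x - algebraMap K Kv c‖ := by
      rw [hr, ← dist_eq_norm]
      exact Metric.infDist_le_dist_of_mem ⟨c, rfl⟩
    rcases hle.lt_or_eq with h | h
    · exact h
    · exfalso
      have hz : x - algebraMap K Kv c ≠ 0 := by
        intro h0
        exact hx ⟨c, (sub_eq_zero.mp h0).symm⟩
      obtain ⟨a, ha⟩ := himm _ hz
      have h1 : x - algebraMap K Kv (c + a) = (x - algebraMap K Kv c) - algebraMap K Kv a := by
        rw [map_add]; ring
      have h2 : r ≤ ‖x - algebraMap K Kv (c + a)‖ := by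
        rw [hr, ← dist_eq_norm]
        exact Metric.infDist_le_dist_of_mem ⟨c + a, rfl⟩
      rw [h1] at h2
      rw [← h] at ha
      linarith
  have hler : ∀ a b : K, ‖a‖ * r ≤ ‖algebraMap K Kv a * x + algebraMap K Kv b‖ := by
    intro a b
    rcases eq_or_ne a 0 with rfl | ha
    · simp
    · have h1 : a * (-(b / a)) = -b := by field_simp
      have h2 : algebraMap K Kv a * x + algebraMap K Kv b
          = algebraMap K Kv a * (x - algebraMap K Kv (-(b / a))) := by
        rw [mul_sub, ← map_mul, h1, map_neg, sub_neg_eq_add]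
      rw [h2, norm_mul, hiso]
      exact mul_le_mul_of_nonneg_left (hgt _).le (norm_nonneg a)
  have main : ∀ f : Submodule.span K {(1 : Kv), x} →ₗ[K] K,
      opNorm f = (1 / (t * r)) *
        ‖algebraMap K Kv (f ⟨x, Submodule.subset_span (by simp)⟩) -
          algebraMap K Kv (f ⟨1, Submodule.subset_span (by simp)⟩) * x‖ := by
    intro f
    set xE : Submodule.span K {(1 : Kv), x} := ⟨x, Submodule.subset_span (by simp)⟩ with hxE
    set oE : Submodule.span K {(1 : Kv), x} := ⟨1, Submodule.subset_span (by simp)⟩ with hoE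
    set α := f xE with hα
    set β := f oE with hβ
    set y := algebraMap K Kv α - algebraMap K Kv β * x with hy
    have hβr : ‖β‖ * r ≤ ‖y‖ := by
      have h1 : y = algebraMap K Kv (-β) * x + algebraMap K Kv α := by
        rw [hy, map_neg]; ring
      have := hler (-β) α
      rw [norm_neg] at this
      rw [h1]
      exact this
    have hrep : ∀ v : Submodule.span K {(1 : Kv), x}, ∃ c d : K,
        (v : Kv) = algebraMap K Kv c + algebraMap K Kv d * x ∧ f v = c * β + d * α := by
      intro v
      obtain ⟨c, d, hcd⟩ := Submodule.mem_span_pair.mp v.2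
      refine ⟨c, d, ?_, ?_⟩
      · rw [← hcd]
        simp [Algebra.smul_def]
      · have hv : v = c • oE + d • xE := by
          apply Subtype.ext
          push_cast
          rw [← hcd]
        rw [hv, map_add, map_smul, map_smul, smul_eq_mul, smul_eq_mul, ← hα, ← hβ]
    have hub : ∀ v : Submodule.span K {(1 : Kv), x}, ‖f v‖ * r ≤ ‖y‖ * ‖(v : Kv)‖ := by
      intro v
      obtain ⟨c, d, hv, hfv⟩ := hrep v
      have key : algebraMap K Kv (c * β + d * α)
          = algebraMap K Kv d * y + (v : Kv) * algebraMap K Kv β := by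
        rw [hv, hy]
        simp only [map_add, map_mul]
        ring
      have h0 : ‖f v‖ = ‖algebraMap K Kv d * y + (v : Kv) * algebraMap K Kv β‖ := by
        rw [hfv, ← hiso (c * β + d * α), key]
      have h1 : ‖f v‖ ≤ max (‖d‖ * ‖y‖) (‖(v : Kv)‖ * ‖β‖) := by
        rw [h0]
        refine le_trans (IsUltrametricDist.norm_add_le_max _ _) ?_
        rw [norm_mul, norm_mul, hiso, hiso]
      have h2 : ‖d‖ * r ≤ ‖(v : Kv)‖ := by
        rw [hv, add_comm]
        exact hler d c
      have h3 : max (‖d‖ * ‖y‖) (‖(v : Kv)‖ * ‖β‖) * r ≤ ‖y‖ * ‖(v : Kv)‖ := by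
        rw [max_mul_of_nonneg _ _ hr0.le]
        apply max_le
        · calc ‖d‖ * ‖y‖ * r = (‖d‖ * r) * ‖y‖ := by ring
            _ ≤ ‖(v : Kv)‖ * ‖y‖ := mul_le_mul_of_nonneg_right h2 (norm_nonneg _)
            _ = ‖y‖ * ‖(v : Kv)‖ := mul_comm _ _
        · calc ‖(v : Kv)‖ * ‖β‖ * r = (‖β‖ * r) * ‖(v : Kv)‖ := by ring
            _ ≤ ‖y‖ * ‖(v : Kv)‖ := mul_le_mul_of_nonneg_right hβr (norm_nonneg _)
      exact le_trans (mul_le_mul_of_nonneg_right h1 hr0.le) h3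
    rw [hopNorm f]
    have hmemS : (1 / (t * r)) * ‖y‖ ∈ {C : ℝ | 0 ≤ C ∧
        ∀ v : Submodule.span K {(1 : Kv), x}, ‖f v‖ ≤ C * (t * ‖(v : Kv)‖)} := by
      constructor
      · positivity
      · intro v
        have heq : (1 / (t * r)) * ‖y‖ * (t * ‖(v : Kv)‖) = ‖y‖ * ‖(v : Kv)‖ / r := by
          field_simp
        rw [heq, le_div_iff₀ hr0]
        exact hub v
    have hlb : ∀ C ∈ {C : ℝ | 0 ≤ C ∧
        ∀ v : Submodule.span K {(1 : Kv), x}, ‖f v‖ ≤ C * (t * ‖(v : Kv)‖)},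
        (1 / (t * r)) * ‖y‖ ≤ C := by
      rintro C ⟨hC0, hCb⟩
      rcases eq_or_ne y 0 with h | hyne
      · rw [h]; simpa using hC0
      · by_contra hcon
        push_neg at hcon
        have hcon' : C < ‖y‖ / (t * r) := by
          have heq : ‖y‖ / (t * r) = 1 / (t * r) * ‖y‖ := by ring
          rw [heq]; exact hcon
        have hClt : C * (t * r) < ‖y‖ := (lt_div_iff₀ htr).mp hcon'
        have hy0 : 0 < ‖y‖ := norm_pos_iff.mpr hyne
        set M := max (C * t) ‖β‖ with hM
        have hM0 : 0 ≤ M := le_trans (norm_nonneg β) (le_max_right _ _)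
        have hβlt : ‖β‖ * r < ‖y‖ := by
          rcases eq_or_ne β 0 with hb | hb
          · rw [hb]; simpa using hy0
          · have hβpos : 0 < ‖β‖ := norm_pos_iff.mpr hb
            have h1 : β * (α / β) = α := by field_simp
            have h2 : ‖y‖ = ‖β‖ * ‖x - algebraMap K Kv (α / β)‖ := by
              have h3 : y = -(algebraMap K Kv β * (x - algebraMap K Kv (α / β))) := by
                rw [mul_sub, ← map_mul, h1, hy]; ring
              rw [h3, norm_neg, norm_mul, hiso]
            rw [h2]
            exact mul_lt_mul_of_pos_left (hgt _) hβpos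
        have hMlt : M * r < ‖y‖ := by
          rw [hM, max_mul_of_nonneg _ _ hr0.le]
          apply max_lt _ hβlt
          calc C * t * r = C * (t * r) := by ring
            _ < ‖y‖ := hClt
        rcases eq_or_lt_of_le hM0 with hM0' | hMpos
        · -- M = 0
          have hct : C * t = 0 := le_antisymm (by rw [hM0']; exact le_max_left _ _)
            (mul_nonneg hC0 ht.le)
          have hb0 : β = 0 := by
            have : ‖β‖ ≤ 0 := by rw [hM0']; exact le_max_right _ _
            exact norm_eq_zero.mp (le_antisymm this (norm_nonneg _))
          have hα0 : α = 0 := by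
            have h4 := hCb xE
            rw [← hα] at h4
            have h5 : C * (t * ‖(xE : Kv)‖) = (C * t) * ‖(xE : Kv)‖ := by ring
            rw [h5, hct, zero_mul] at h4
            exact norm_eq_zero.mp (le_antisymm h4 (norm_nonneg _))
          apply hyne
          rw [hy, hα0, hb0, map_zero, zero_mul, sub_zero]
        · -- M > 0
          have h6 : r < ‖y‖ / M := by
            rw [lt_div_iff₀ hMpos]
            rw [mul_comm]
            exact hMlt
          rw [hr] at h6
          obtain ⟨z, ⟨c, rfl⟩, hc⟩ := (Metric.infDist_lt_iff hrange_ne).mp h6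
          rw [dist_eq_norm] at hc
          have hw : ‖x - algebraMap K Kv c‖ * M < ‖y‖ := (lt_div_iff₀ hMpos).mp hc
          have hmemv : x - algebraMap K Kv c ∈ Submodule.span K ({(1 : Kv), x} : Set Kv) := by
            apply Submodule.mem_span_pair.mpr
            exact ⟨-c, 1, by simp [Algebra.smul_def]; ring⟩
          set vc : Submodule.span K {(1 : Kv), x} := ⟨x - algebraMap K Kv c, hmemv⟩ with hvc
          have hfvc : f vc = -c * β + α := by
            have hv : vc = (-c) • oE + (1 : K) • xE := by
              apply Subtype.ext
              push_cast
              simp [Algebra.smul_def, map_neg]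
              ring
            rw [hv, map_add, map_smul, map_smul, smul_eq_mul, smul_eq_mul, ← hα, ← hβ]
            ring
          have hnorm1 : ‖f vc‖ = ‖y + algebraMap K Kv β * (x - algebraMap K Kv c)‖ := by
            rw [hfvc, ← hiso (-c * β + α)]
            congr 1
            rw [hy]
            simp only [map_add, map_mul, map_neg]
            ring
          have hlt2 : ‖algebraMap K Kv β * (x - algebraMap K Kv c)‖ < ‖y‖ := by
            rw [norm_mul, hiso]
            calc ‖β‖ * ‖x - algebraMap K Kv c‖
                ≤ M * ‖x - algebraMap K Kv c‖ :=
                  mul_le_mul_of_nonneg_right (le_max_right _ _) (norm_nonneg _)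
              _ = ‖x - algebraMap K Kv c‖ * M := mul_comm _ _
              _ < ‖y‖ := hw
          have hge : ‖y‖ ≤ ‖f vc‖ := by
            rw [hnorm1]
            have h4 : ‖y‖ ≤ max ‖y + algebraMap K Kv β * (x - algebraMap K Kv c)‖
                ‖algebraMap K Kv β * (x - algebraMap K Kv c)‖ := by
              calc ‖y‖ = ‖(y + algebraMap K Kv β * (x - algebraMap K Kv c)) +
                  (-(algebraMap K Kv β * (x - algebraMap K Kv c)))‖ := by ring_nf
                _ ≤ _ := by
                    refine le_trans (IsUltrametricDist.norm_add_le_max _ _) ?_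
                    rw [norm_neg]
            rcases le_max_iff.mp h4 with h | h
            · exact h
            · linarith
          have hle2 : ‖f vc‖ < ‖y‖ := by
            have h5 := hCb vc
            have h6 : C * (t * ‖(vc : Kv)‖) = (C * t) * ‖(vc : Kv)‖ := by ring
            rw [h6] at h5
            have h7 : (C * t) * ‖(vc : Kv)‖ ≤ M * ‖(vc : Kv)‖ :=
              mul_le_mul_of_nonneg_right (le_max_left _ _) (norm_nonneg _)
            have h8 : (vc : Kv) = x - algebraMap K Kv c := rfl
            calc ‖f vc‖ ≤ (C * t) * ‖(vc : Kv)‖ := h5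
              _ ≤ M * ‖(vc : Kv)‖ := h7
              _ = ‖x - algebraMap K Kv c‖ * M := by rw [h8]; ring
              _ < ‖y‖ := hw
          linarith
    have hbdd : BddBelow {C : ℝ | 0 ≤ C ∧
        ∀ v : Submodule.span K {(1 : Kv), x}, ‖f v‖ ≤ C * (t * ‖(v : Kv)‖)} :=
      ⟨0, fun C hC => hC.1⟩
    exact le_antisymm (csInf_le hbdd hmemS) (le_csInf ⟨_, hmemS⟩ hlb)
  refine ⟨?_, ?_, ?_, main⟩
  · rw [main e₁, he₁x, he₁1]
    simp
  · rw [main e₂, he₂x, he₂1]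
    simp only [map_zero, map_one, one_mul, zero_sub, norm_neg]
    ring
  · intro l hl
    rw [main (e₁ + l • e₂)]
    simp only [LinearMap.add_apply, LinearMap.smul_apply, he₁x, he₁1, he₂x, he₂1,
      smul_eq_mul, mul_zero, mul_one, add_zero, zero_add, map_one]
    ring
end

section
/- Let K be a complete non-archimedean nontrivially valued field which is not spherically complete, and K^∨ a spherically complete immediate extension. Let E be a 2-dimensional K-normed space with basis e₁, e₂ such that no two-element subset of E \ {0} spanning E is orthogonal (equivalently, dim_{K^∨} E^∨ = 1). Choose a sequence λₙ ∈ K with ‖e₂ − λₙe₁‖ → d_E(e₂, K e₁). If x ∈ K^∨ \ K satisfies |x − λₙ| → d(x,K), then the K-linear map E → span_K{1,x} with e₁ ↦ 1, e₂ ↦ x is an isometry onto (span_K{1,x}, t|·|) where t = ‖e₁‖. -/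
open Metric

/-!
Write `t = ‖e₁‖`, `d = d_E(e₂, K e₁)` and `D = d(x, K)`. Since `K^∨ / K` is immediate and `x ∉ K`,
`D` is not attained. If `t D < d`, then `t |λₙ - λₘ| < d` for large `n, m`, so by the ultrametric
inequality `‖e₂ - λₙ e₁‖` is eventually constant and `d` is attained at some `e₂ - b e₁`; a best
approximation is orthogonal to `e₁`, contradicting `dim E^∨ = 1`. Hence `d ≤ t D`. Now for any
`a ∈ K` pick `n` with `|x - λₙ| < |x - a|` and `‖e₂ - λₙ e₁‖ < t |x - a|`; two applications of the
strict ultrametric inequality give `‖e₂ - a e₁‖ = t |λₙ - a| = t |x - a|`, and scaling by `m`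
gives the isometry.
-/

open Filter Topology Set

theorem IsUltrametricDist.norm_add_eq_right_of_lt {E : Type*} [SeminormedAddCommGroup E]
    [IsUltrametricDist E] {u v : E} (h : ‖u‖ < ‖v‖) : ‖u + v‖ = ‖v‖ := by
  rw [IsUltrametricDist.norm_add_eq_max_of_norm_ne_norm h.ne, max_eq_right h.le]

theorem Submodule.span_pair_sub_smul {R M : Type*} [Ring R] [AddCommGroup M] [Module R M]
    (u v : M) (b : R) : span R {u, v - b • u} = span R {u, v} := by
  have hu : ∀ w : M, u ∈ span R {u, w} := fun w => subset_span (mem_insert u {w})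
  have hw : ∀ w : M, w ∈ span R {u, w} := fun w => subset_span (mem_insert_of_mem u rfl)
  apply le_antisymm <;> rw [span_le, insert_subset_iff, singleton_subset_iff]
  · exact ⟨hu v, sub_mem (hw v) (smul_mem _ b (hu v))⟩
  · refine ⟨hu _, ?_⟩
    simpa using add_mem (hw (v - b • u)) (smul_mem _ b (hu (v - b • u)))

section BestApproximation

variable {K E : Type*} [NormedField K] [SeminormedAddCommGroup E] [NormedSpace K E]

theorem infDist_range_smul_le_norm_sub_smul (v u : E) (a : K) :
    infDist v (range fun c : K => c • u) ≤ ‖v - a • u‖ := by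
  simpa [dist_eq_norm] using infDist_le_dist_of_mem (mem_range_self (f := fun c : K => c • u) a)

variable [IsUltrametricDist E]

theorem norm_smul_add_eq_max_of_forall_norm_le {u f : E} (hf : ∀ c : K, ‖f‖ ≤ ‖c • u + f‖)
    (c : K) : ‖c • u + f‖ = max ‖c • u‖ ‖f‖ := by
  rcases lt_or_ge ‖f‖ ‖c • u‖ with h | h
  · rw [add_comm, IsUltrametricDist.norm_add_eq_right_of_lt h, max_eq_left h.le]
  · rw [max_eq_right h]
    exact le_antisymm ((IsUltrametricDist.norm_add_le_max _ _).trans (max_le h le_rfl)) (hf c)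

theorem norm_smul_add_smul_eq_max_of_forall_norm_le {u f : E} (hf : ∀ c : K, ‖f‖ ≤ ‖c • u + f‖)
    (l m : K) : ‖l • u + m • f‖ = max ‖l • u‖ ‖m • f‖ := by
  rcases eq_or_ne m 0 with rfl | hm
  · simp
  have hscale : l • u + m • f = m • ((l / m) • u + f) := by
    rw [smul_add, smul_smul, mul_div_cancel₀ _ hm]
  rw [hscale, norm_smul, norm_smul_add_eq_max_of_forall_norm_le hf,
    mul_max_of_nonneg _ _ (norm_nonneg m), ← norm_smul, ← norm_smul, smul_smul,
    mul_div_cancel₀ _ hm]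

end BestApproximation

section ImmediateExtension

variable {K Kv : Type*} [NormedField K] [NormedField Kv] [Algebra K Kv]

theorem infDist_range_algebraMap_le (x : Kv) (a : K) :
    infDist x (range (algebraMap K Kv)) ≤ ‖x - algebraMap K Kv a‖ := by
  simpa [dist_eq_norm] using infDist_le_dist_of_mem (mem_range_self (f := algebraMap K Kv) a)

theorem infDist_range_algebraMap_lt
    (himm : ∀ z : Kv, z ≠ 0 → ∃ a : K, ‖z - algebraMap K Kv a‖ < ‖z‖)
    {x : Kv} (hx : x ∉ range (algebraMap K Kv)) (a : K) :
    infDist x (range (algebraMap K Kv)) < ‖x - algebraMap K Kv a‖ := by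
  refine (infDist_range_algebraMap_le x a).lt_of_ne fun heq => ?_
  obtain ⟨b, hb⟩ := himm _ (sub_ne_zero.mpr fun h => hx ⟨a, h.symm⟩)
  rw [sub_sub, ← map_add, ← heq] at hb
  exact (infDist_range_algebraMap_le x (a + b)).not_gt hb

end ImmediateExtension

section Isometry

variable {K Kv E : Type*} [NormedField K] [NormedField Kv] [Algebra K Kv]
  [SeminormedAddCommGroup E] [NormedSpace K E]
  (hiso : ∀ a : K, ‖algebraMap K Kv a‖ = ‖a‖) {e₁ e₂ : E} {x : Kv}
include hiso

theorem norm_smul_add_smul_eq_mul_norm_add_mul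
    (hkey : ∀ a : K, ‖e₂ - a • e₁‖ = ‖e₁‖ * ‖x - algebraMap K Kv a‖) (l m : K) :
    ‖l • e₁ + m • e₂‖ = ‖e₁‖ * ‖algebraMap K Kv l + algebraMap K Kv m * x‖ := by
  rcases eq_or_ne m 0 with rfl | hm
  · simp [norm_smul, hiso, mul_comm]
  have hE : l • e₁ + m • e₂ = m • (e₂ - (-(l / m)) • e₁) := by
    rw [smul_sub, smul_smul, mul_neg, mul_div_cancel₀ _ hm]
    module
  have hKv : algebraMap K Kv l + algebraMap K Kv m * x =
      algebraMap K Kv m * (x - algebraMap K Kv (-(l / m))) := by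
    rw [mul_sub, ← map_mul, mul_neg, mul_div_cancel₀ _ hm, map_neg]
    ring
  rw [hE, hKv, norm_smul, hkey, norm_mul, hiso, mul_left_comm]

variable [IsUltrametricDist Kv] [IsUltrametricDist E] {lam : ℕ → K}
  (hlam : Tendsto (fun n => ‖e₂ - lam n • e₁‖) atTop
    (𝓝 (infDist e₂ (range fun c : K => c • e₁))))
  (hxlam : Tendsto (fun n => ‖x - algebraMap K Kv (lam n)‖) atTop
    (𝓝 (infDist x (range (algebraMap K Kv)))))
include hlam hxlam

theorem exists_norm_sub_smul_eq_infDist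
    (h : ‖e₁‖ * infDist x (range (algebraMap K Kv)) < infDist e₂ (range fun c : K => c • e₁)) :
    ∃ b : K, ‖e₂ - b • e₁‖ = infDist e₂ (range fun c : K => c • e₁) := by
  obtain ⟨N, hN⟩ := eventually_atTop.mp ((hxlam.const_mul ‖e₁‖).eventually_lt_const h)
  have hconst : ∀ n ≥ N, ‖e₂ - lam n • e₁‖ = ‖e₂ - lam N • e₁‖ := by
    intro n hn
    have hsmall : ‖(lam N - lam n) • e₁‖ < ‖e₂ - lam N • e₁‖ := calc
      ‖(lam N - lam n) • e₁‖ =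
          ‖e₁‖ * ‖(x - algebraMap K Kv (lam n)) + (algebraMap K Kv (lam N) - x)‖ := by
        rw [norm_smul, mul_comm, sub_add_sub_cancel', ← map_sub, hiso]
      _ ≤ ‖e₁‖ * max ‖x - algebraMap K Kv (lam n)‖ ‖x - algebraMap K Kv (lam N)‖ := by
        rw [norm_sub_rev x (algebraMap K Kv (lam N))]
        exact mul_le_mul_of_nonneg_left (IsUltrametricDist.norm_add_le_max _ _) (norm_nonneg _)
      _ = max (‖e₁‖ * ‖x - algebraMap K Kv (lam n)‖) (‖e₁‖ * ‖x - algebraMap K Kv (lam N)‖) :=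
        mul_max_of_nonneg _ _ (norm_nonneg _)
      _ < infDist e₂ (range fun c : K => c • e₁) := max_lt (hN n hn) (hN N le_rfl)
      _ ≤ ‖e₂ - lam N • e₁‖ := infDist_range_smul_le_norm_sub_smul _ _ _
    calc ‖e₂ - lam n • e₁‖ = ‖(lam N - lam n) • e₁ + (e₂ - lam N • e₁)‖ := by congr 1; module
      _ = ‖e₂ - lam N • e₁‖ := IsUltrametricDist.norm_add_eq_right_of_lt hsmall
  refine ⟨lam N, tendsto_nhds_unique (tendsto_const_nhds.congr' ?_) hlam⟩
  filter_upwards [eventually_ge_atTop N] with n hn using (hconst n hn).symm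

theorem infDist_le_mul_infDist (he₁ : e₁ ≠ 0)
    (hspan : Submodule.span K {e₁, e₂} = ⊤)
    (hnoorth : ∀ u v : E, u ≠ 0 → v ≠ 0 → Submodule.span K {u, v} = ⊤ →
      ¬ ∀ l m : K, ‖l • u + m • v‖ = max ‖l • u‖ ‖m • v‖) :
    infDist e₂ (range fun c : K => c • e₁) ≤ ‖e₁‖ * infDist x (range (algebraMap K Kv)) := by
  by_contra! h
  obtain ⟨b, hb⟩ := exists_norm_sub_smul_eq_infDist hiso hlam hxlam h
  have hbest : ∀ c : K, ‖e₂ - b • e₁‖ ≤ ‖c • e₁ + (e₂ - b • e₁)‖ := fun c => by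
    rw [hb, show c • e₁ + (e₂ - b • e₁) = e₂ - (b - c) • e₁ by module]
    exact infDist_range_smul_le_norm_sub_smul _ _ _
  have hne : e₂ - b • e₁ ≠ 0 :=
    ne_zero_of_norm_ne_zero (hb ▸ (mul_nonneg (norm_nonneg _) infDist_nonneg).trans_lt h).ne'
  exact hnoorth e₁ _ he₁ hne (by rwa [Submodule.span_pair_sub_smul])
    (norm_smul_add_smul_eq_max_of_forall_norm_le hbest)

theorem norm_sub_smul_eq_mul_norm_sub (he₁ : 0 < ‖e₁‖)
    (hle : infDist e₂ (range fun c : K => c • e₁) ≤ ‖e₁‖ * infDist x (range (algebraMap K Kv)))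
    {a : K} (hlt : infDist x (range (algebraMap K Kv)) < ‖x - algebraMap K Kv a‖) :
    ‖e₂ - a • e₁‖ = ‖e₁‖ * ‖x - algebraMap K Kv a‖ := by
  have hda : infDist e₂ (range fun c : K => c • e₁) < ‖e₁‖ * ‖x - algebraMap K Kv a‖ :=
    hle.trans_lt (mul_lt_mul_of_pos_left hlt he₁)
  obtain ⟨n, hxn, hen⟩ :=
    ((hxlam.eventually_lt_const hlt).and (hlam.eventually_lt_const hda)).exists
  have hna : ‖(lam n - a) • e₁‖ = ‖e₁‖ * ‖x - algebraMap K Kv a‖ := by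
    rw [norm_smul, mul_comm, ← hiso, map_sub,
      show algebraMap K Kv (lam n) - algebraMap K Kv a =
        (algebraMap K Kv (lam n) - x) + (x - algebraMap K Kv a) by ring,
      IsUltrametricDist.norm_add_eq_right_of_lt (by rwa [norm_sub_rev])]
  calc ‖e₂ - a • e₁‖ = ‖(e₂ - lam n • e₁) + (lam n - a) • e₁‖ := by congr 1; module
    _ = ‖e₁‖ * ‖x - algebraMap K Kv a‖ := by
      rw [IsUltrametricDist.norm_add_eq_right_of_lt (hna ▸ hen), hna]

end Isometry

open Filter Topology in
theorem stmt9_general {K Kv E : Type*} [NontriviallyNormedField K]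
    [NormedField Kv] [IsUltrametricDist Kv] [Algebra K Kv]
    [NormedAddCommGroup E] [NormedSpace K E] [IsUltrametricDist E]
    (hiso : ∀ a : K, ‖algebraMap K Kv a‖ = ‖a‖)
    (himm : ∀ z : Kv, z ≠ 0 → ∃ a : K, ‖z - algebraMap K Kv a‖ < ‖z‖)
    (e₁ e₂ : E) (hind : LinearIndependent K ![e₁, e₂])
    (hspan : Submodule.span K {e₁, e₂} = ⊤)
    (hnoorth : ∀ u v : E, u ≠ 0 → v ≠ 0 → Submodule.span K {u, v} = ⊤ →
      ¬ ∀ l m : K, ‖l • u + m • v‖ = max ‖l • u‖ ‖m • v‖)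
    (lam : ℕ → K)
    (hlam : Tendsto (fun n => ‖e₂ - lam n • e₁‖) atTop
      (𝓝 (Metric.infDist e₂ (Set.range fun c : K => c • e₁))))
    (x : Kv) (hx : x ∉ Set.range (algebraMap K Kv))
    (hxlam : Tendsto (fun n => ‖x - algebraMap K Kv (lam n)‖) atTop
      (𝓝 (Metric.infDist x (Set.range (algebraMap K Kv))))) :
    ∀ l m : K, ‖l • e₁ + m • e₂‖ =
      ‖e₁‖ * ‖algebraMap K Kv l + algebraMap K Kv m * x‖ := by
  have he₁ : e₁ ≠ 0 := by simpa using hind.ne_zero 0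
  have hle := infDist_le_mul_infDist hiso hlam hxlam he₁ hspan hnoorth
  exact norm_smul_add_smul_eq_mul_norm_add_mul hiso fun a =>
    norm_sub_smul_eq_mul_norm_sub hiso hlam hxlam (norm_pos_iff.mpr he₁) hle (infDist_range_algebraMap_lt himm hx a)

open Filter Topology in
theorem stmt9 {K Kv E : Type*} [NontriviallyNormedField K] [CompleteSpace K]
    [IsUltrametricDist K] [NormedField Kv] [IsUltrametricDist Kv] [Algebra K Kv]
    [NormedAddCommGroup E] [NormedSpace K E] [IsUltrametricDist E]
    (hiso : ∀ a : K, ‖algebraMap K Kv a‖ = ‖a‖)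
    (hKns : ¬ SphericallyComplete K)
    (hsph : SphericallyComplete Kv)
    (himm : ∀ z : Kv, z ≠ 0 → ∃ a : K, ‖z - algebraMap K Kv a‖ < ‖z‖)
    (e₁ e₂ : E) (hind : LinearIndependent K ![e₁, e₂])
    (hspan : Submodule.span K {e₁, e₂} = ⊤)
    (hnoorth : ∀ u v : E, u ≠ 0 → v ≠ 0 → Submodule.span K {u, v} = ⊤ →
      ¬ ∀ l m : K, ‖l • u + m • v‖ = max ‖l • u‖ ‖m • v‖)
    (lam : ℕ → K)
    (hlam : Tendsto (fun n => ‖e₂ - lam n • e₁‖) atTop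
      (𝓝 (Metric.infDist e₂ (Set.range fun c : K => c • e₁))))
    (x : Kv) (hx : x ∉ Set.range (algebraMap K Kv))
    (hxlam : Tendsto (fun n => ‖x - algebraMap K Kv (lam n)‖) atTop
      (𝓝 (Metric.infDist x (Set.range (algebraMap K Kv))))) :
    ∀ l m : K, ‖l • e₁ + m • e₂‖ =
      ‖e₁‖ * ‖algebraMap K Kv l + algebraMap K Kv m * x‖ :=
  stmt9_general hiso himm e₁ e₂ hind hspan hnoorth lam hlam x hx hxlam
end

section
/- Let K be a complete non-archimedean valued field (possibly spherically complete) and t₁,...,tₙ, s₁,...,sₙ > 0. Equip Kⁿ with the norm ‖(a₁,...,aₙ)‖_t = max_i t_i|a_i|, and similarly with the s_i. Then (Kⁿ, ‖·‖_t) and (Kⁿ, ‖·‖_s) are isometrically isomorphic as K-normed spaces if and only if there exists a permutation σ of {1,...,n} such that t_i/s_{σ(i)} ∈ |K^×| for every i. -/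
/-!
For `r > 0` the number of indices `i` with `r ∈ |Kˣ| · tᵢ` is an isometry invariant. Indeed, if
an isometry `T` maps the `t`-space to the `s`-space and `A`, `B` are these index sets for `t` and
`s` with `#B < #A`, pick `wᵢ = aᵢ eᵢ` of norm `r` for `i ∈ A`. The vectors `T wᵢ` restricted to
the coordinates in `B` are linearly dependent, say `∑ gᵢ (T wᵢ)|_B = 0`, and `c = ∑ gᵢ wᵢ` has
norm `≥ r · max ‖gᵢ‖`. But `T c` vanishes on `B`, and off `B` each coordinate of every `T wᵢ` has
weighted norm `< r` (the value `r` is not attained there), so by the ultrametric inequality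
`‖T c‖ < r · max ‖gᵢ‖`. Equal fiber counts of `i ↦ |Kˣ| · tᵢ` and `j ↦ |Kˣ| · sⱼ` then give the
permutation; conversely a permutation with unit scalings is an isometry.
-/

open Finset

section valueCoset

variable {K : Type*} [NormedField K]

variable (K) in
def valueCoset (x : ℝ) : Set ℝ := Set.range fun a : Kˣ => ‖(a : K)‖ * x

lemma self_mem_valueCoset (x : ℝ) : x ∈ valueCoset K x := ⟨1, by simp⟩

lemma valueCoset_eq_valueCoset_iff {x y : ℝ} :
    valueCoset K x = valueCoset K y ↔ y ∈ valueCoset K x := by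
  refine ⟨fun h => h ▸ self_mem_valueCoset y, ?_⟩
  rintro ⟨a, rfl⟩
  have ha : ‖(a : K)‖ ≠ 0 := norm_ne_zero_iff.mpr a.ne_zero
  ext z
  constructor
  · rintro ⟨b, rfl⟩
    refine ⟨b * a⁻¹, ?_⟩
    simp only [Units.val_mul, Units.val_inv_eq_inv_val, norm_mul, norm_inv]
    field_simp
  · rintro ⟨b, rfl⟩
    exact ⟨b * a, by simp only [Units.val_mul, norm_mul]; ring⟩

lemma mem_valueCoset_iff_exists_norm_eq_div {x y : ℝ} (hx : x ≠ 0) :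
    y ∈ valueCoset K x ↔ ∃ a : K, a ≠ 0 ∧ ‖a‖ = y / x := by
  simp only [valueCoset, Set.mem_range, eq_div_iff hx]
  exact ⟨fun ⟨a, ha⟩ => ⟨a, a.ne_zero, ha⟩, fun ⟨a, ha0, ha⟩ => ⟨Units.mk0 a ha0, ha⟩⟩

lemma mul_norm_lt_of_notMem_valueCoset {s r : ℝ} {x : K} (hr : 0 < r) (hle : s * ‖x‖ ≤ r)
    (hrs : r ∉ valueCoset K s) : s * ‖x‖ < r := by
  refine hle.lt_of_ne fun h => ?_
  rcases eq_or_ne x 0 with rfl | hx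
  · simp [← h] at hr
  · exact hrs ⟨Units.mk0 x hx, by simp only [Units.val_mk0, mul_comm, h]⟩

end valueCoset

section weightedSupNorm

variable {K : Type*} [NormedField K] {ι : Type*}

noncomputable def weightedSupNorm (t : ι → ℝ) (v : ι → K) : ℝ := ⨆ i, t i * ‖v i‖

lemma le_weightedSupNorm [Finite ι] (t : ι → ℝ) (v : ι → K) (i : ι) :
    t i * ‖v i‖ ≤ weightedSupNorm t v :=
  le_ciSup (f := fun i => t i * ‖v i‖) (Finite.bddAbove_range _) i

lemma weightedSupNorm_le {t : ι → ℝ} {v : ι → K} {r : ℝ} (hr : 0 ≤ r)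
    (h : ∀ i, t i * ‖v i‖ ≤ r) : weightedSupNorm t v ≤ r :=
  Real.iSup_le h hr

lemma weightedSupNorm_lt [Finite ι] {t : ι → ℝ} {v : ι → K} {r : ℝ} (hr : 0 < r)
    (h : ∀ i, t i * ‖v i‖ < r) : weightedSupNorm t v < r := by
  cases isEmpty_or_nonempty ι
  · rwa [weightedSupNorm, Real.iSup_of_isEmpty]
  · obtain ⟨i, hi⟩ := exists_eq_ciSup_of_finite (f := fun i => t i * ‖v i‖)
    rw [weightedSupNorm, ← hi]
    exact h i

lemma weightedSupNorm_comp_symm (t : ι → ℝ) (v : ι → K) (σ : Equiv.Perm ι) :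
    weightedSupNorm t (v ∘ σ.symm) = weightedSupNorm (t ∘ σ) v := by
  rw [weightedSupNorm, ← σ.iSup_comp]
  simp [weightedSupNorm]

lemma weightedSupNorm_mul (t : ι → ℝ) (a v : ι → K) :
    weightedSupNorm t (a * v) = weightedSupNorm (fun i => t i * ‖a i‖) v := by
  simp only [weightedSupNorm, Pi.mul_apply, norm_mul, mul_assoc]

end weightedSupNorm

lemma Fintype.exists_perm_of_card_fiber_eq {α γ : Type*} [Fintype α] [DecidableEq γ] {f g : α → γ}
    (h : ∀ c, #{i | f i = c} = #{i | g i = c}) : ∃ σ : Equiv.Perm α, ∀ i, g (σ i) = f i :=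
  ⟨Equiv.ofFiberEquiv fun c =>
    Fintype.equivOfCardEq (by rw [Fintype.card_subtype, Fintype.card_subtype, h]),
    Equiv.ofFiberEquiv_map _⟩

section count

variable {K : Type*} [NormedField K] [IsUltrametricDist K] {ι κ : Type*} [Fintype ι] [Fintype κ]
  {t : ι → ℝ} {s : κ → ℝ}

lemma mul_norm_sum_mul_lt {α : Type*} [Fintype α] [Nonempty α] {g y : α → K} {c M r : ℝ}
    (hc : 0 ≤ c) (hM : 0 < M) (hg : ∀ i, ‖g i‖ ≤ M) (hy : ∀ i, c * ‖y i‖ < r) :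
    c * ‖∑ i, g i * y i‖ < M * r := by
  obtain ⟨i, -, hi⟩ := IsUltrametricDist.exists_norm_finsetSum_le univ fun i => g i * y i
  calc c * ‖∑ i, g i * y i‖ ≤ c * ‖g i * y i‖ := by gcongr
    _ = ‖g i‖ * (c * ‖y i‖) := by rw [norm_mul]; ring
    _ < M * r := mul_lt_mul' (hg i) (hy i) (by positivity) hM

open Classical in
lemma card_filter_mem_valueCoset_le (hs : ∀ j, 0 ≤ s j)
    (T : (ι → K) →ₗ[K] (κ → K)) (hT : ∀ v, weightedSupNorm s (T v) = weightedSupNorm t v)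
    {r : ℝ} (hr : 0 < r) :
    #{i | r ∈ valueCoset K (t i)} ≤ #{j | r ∈ valueCoset K (s j)} := by
  by_contra! hlt
  set A : Finset ι := {i | r ∈ valueCoset K (t i)}
  set B : Finset κ := {j | r ∈ valueCoset K (s j)}
  choose a ha using fun i : A => (mem_filter.mp i.2).2
  let w : A → ι → K := fun i => Pi.single i.1 (a i : K)
  have hw : ∀ i, weightedSupNorm t (w i) ≤ r := fun i => weightedSupNorm_le hr.le fun k => by
    rcases eq_or_ne k i with rfl | hk
    · simpa [w, mul_comm] using (ha i).le
    · simp [w, Pi.single_eq_of_ne hk, hr.le]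
  obtain ⟨g, hg, i₀, hi₀⟩ : ∃ g : A → K, (∀ j ∈ B, ∑ i, g i * T (w i) j = 0) ∧ ∃ i, g i ≠ 0 := by
    have hdep : ¬ LinearIndependent K fun i : A => fun j : B => T (w i) j := fun hli => by
      have := hli.fintype_card_le_finrank
      simp only [Module.finrank_fintype_fun_eq_card, Fintype.card_coe] at this
      omega
    obtain ⟨g, hg, hg0⟩ := Fintype.not_linearIndependent_iff.mp hdep
    exact ⟨g, fun j hj => by simpa using congrFun hg ⟨j, hj⟩, hg0⟩
  obtain ⟨m, -, hm⟩ := exists_max_image univ (‖g ·‖) ⟨i₀, mem_univ _⟩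
  have hgm : 0 < ‖g m‖ := (norm_pos_iff.mpr hi₀).trans_le (hm i₀ (mem_univ _))
  set c := ∑ i, g i • w i
  have hc : r * ‖g m‖ ≤ weightedSupNorm t c := by
    have hcm : c m = g m * a m := by
      simp [c, Finset.sum_apply, w, Pi.single_apply]
    calc r * ‖g m‖ = t m * ‖c m‖ := by rw [hcm, norm_mul, ← ha]; ring
      _ ≤ weightedSupNorm t c := le_weightedSupNorm t c m
  have hTc : weightedSupNorm s (T c) < r * ‖g m‖ := weightedSupNorm_lt (by positivity) fun j => by
    have hTcj : T c j = ∑ i, g i * T (w i) j := by simp [c, map_sum, Finset.sum_apply]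
    by_cases hj : j ∈ B
    · rw [hTcj, hg j hj]
      simpa using mul_pos hr hgm
    have hwj : ∀ i, s j * ‖T (w i) j‖ < r := fun i =>
      mul_norm_lt_of_notMem_valueCoset hr
        ((le_weightedSupNorm s _ j).trans ((hT _).trans_le (hw i))) (by simpa [B] using hj)
    have : Nonempty A := ⟨i₀⟩
    rw [hTcj, mul_comm r]
    exact mul_norm_sum_mul_lt (hs j) hgm (fun i => hm i (mem_univ _)) hwj
  linarith [hT c]

open Classical in
lemma card_filter_valueCoset_eq_le (ht : ∀ i, 0 < t i) (hs : ∀ j, 0 ≤ s j)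
    (T : (ι → K) →ₗ[K] (κ → K)) (hT : ∀ v, weightedSupNorm s (T v) = weightedSupNorm t v)
    (C : Set ℝ) :
    #{i | valueCoset K (t i) = C} ≤ #{j | valueCoset K (s j) = C} := by
  by_cases hC : ∃ i, valueCoset K (t i) = C
  · obtain ⟨i₀, rfl⟩ := hC
    simpa only [valueCoset_eq_valueCoset_iff] using card_filter_mem_valueCoset_le hs T hT (ht i₀)
  · simp [filter_eq_empty_iff.mpr fun i _ => not_exists.mp hC i]

end count

theorem stmt10_general {K : Type*} [NontriviallyNormedField K]
    [IsUltrametricDist K] (n : ℕ) (t s : Fin n → ℝ)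
    (ht : ∀ i, 0 < t i) (hs : ∀ i, 0 < s i) :
    (∃ T : (Fin n → K) ≃ₗ[K] (Fin n → K),
        ∀ v : Fin n → K, (⨆ i, s i * ‖T v i‖) = ⨆ i, t i * ‖v i‖) ↔
      ∃ σ : Equiv.Perm (Fin n), ∀ i, ∃ a : K, a ≠ 0 ∧ ‖a‖ = t i / s (σ i) := by
  classical
  constructor
  · rintro ⟨T, hT⟩
    have hT' (v : Fin n → K) : weightedSupNorm t (T.symm v) = weightedSupNorm s v := by
      have := hT (T.symm v)
      rw [T.apply_symm_apply] at this
      exact this.symm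
    obtain ⟨σ, hσ⟩ := Fintype.exists_perm_of_card_fiber_eq fun C => le_antisymm
      (card_filter_valueCoset_eq_le ht (fun j => (hs j).le) T.toLinearMap hT C)
      (card_filter_valueCoset_eq_le hs (fun j => (ht j).le) T.symm.toLinearMap hT' C)
    exact ⟨σ, fun i => (mem_valueCoset_iff_exists_norm_eq_div (hs (σ i)).ne').mp
      (valueCoset_eq_valueCoset_iff.mp (hσ i))⟩
  · rintro ⟨σ, hσ⟩
    choose a ha0 ha using hσ
    let D : (Fin n → K) ≃ₗ[K] (Fin n → K) :=
      LinearEquiv.piCongrRight fun i => LinearEquiv.smulOfUnit (Units.mk0 (a i) (ha0 i))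
    refine ⟨D.trans (LinearEquiv.funCongrLeft K K σ.symm), fun v => ?_⟩
    have hts : (fun i => s (σ i) * ‖a i‖) = t := funext fun i => by
      rw [ha, mul_div_cancel₀ _ (hs (σ i)).ne']
    change weightedSupNorm s ((a * v) ∘ σ.symm) = weightedSupNorm t v
    rw [weightedSupNorm_comp_symm, weightedSupNorm_mul, ← hts]
    rfl

theorem stmt10 {K : Type*} [NontriviallyNormedField K] [CompleteSpace K]
    [IsUltrametricDist K] (n : ℕ) (t s : Fin n → ℝ)
    (ht : ∀ i, 0 < t i) (hs : ∀ i, 0 < s i) :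
    (∃ T : (Fin n → K) ≃ₗ[K] (Fin n → K),
        ∀ v : Fin n → K, (⨆ i, s i * ‖T v i‖) = ⨆ i, t i * ‖v i‖) ↔
      ∃ σ : Equiv.Perm (Fin n), ∀ i, ∃ a : K, a ≠ 0 ∧ ‖a‖ = t i / s (σ i) :=
  stmt10_general n t s ht hs
end

section
/- Let K be a complete non-archimedean nontrivially valued field and let E be an n-dimensional K-normed space such that for every subspace F ⊆ E with dim E/F = 2 and every two nonzero u, v ∈ E/F spanning E/F (with the quotient norm), the set {u, v} is not orthogonal. Then all (n−1)-dimensional subspaces of E are isometrically isomorphic to each other. -/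
open Module

section Aux

lemma aux_ultra_quot {K E : Type*} [NormedField K] [SeminormedAddCommGroup E]
    [NormedSpace K E] [IsUltrametricDist E] (F : Submodule K E) :
    IsUltrametricDist (E ⧸ F) := by
  apply IsUltrametricDist.isUltrametricDist_of_forall_norm_add_le_max_norm
  intro x y
  refine le_of_forall_pos_le_add fun ε hε => ?_
  obtain ⟨a, ha, hna⟩ := Submodule.Quotient.norm_mk_lt x hε
  obtain ⟨b, hb, hnb⟩ := Submodule.Quotient.norm_mk_lt y hε
  have hxy : x + y = Submodule.Quotient.mk (a + b) := by
    rw [Submodule.Quotient.mk_add, ha, hb]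
  rw [hxy]
  calc ‖(Submodule.Quotient.mk (a + b) : E ⧸ F)‖ ≤ ‖a + b‖ :=
        Submodule.Quotient.norm_mk_le F _
    _ ≤ max ‖a‖ ‖b‖ := IsUltrametricDist.norm_add_le_max a b
    _ ≤ max ‖x‖ ‖y‖ + ε := max_le
        (hna.le.trans (by simp [le_max_left ‖x‖ ‖y‖]))
        (hnb.le.trans (by simp [le_max_right ‖x‖ ‖y‖]))

lemma aux_norm_sub_eq_left {E : Type*} [SeminormedAddCommGroup E] [IsUltrametricDist E]
    {a b : E} (h : ‖b‖ < ‖a‖) : ‖a - b‖ = ‖a‖ := by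
  have hne : ‖a‖ ≠ ‖-b‖ := by rw [norm_neg]; exact h.ne'
  rw [sub_eq_add_neg, IsUltrametricDist.norm_add_eq_max_of_norm_ne_norm hne,
    norm_neg, max_eq_left h.le]

end Aux

theorem stmt11 {K E : Type*} [NontriviallyNormedField K] [CompleteSpace K]
    [IsUltrametricDist K] [NormedAddCommGroup E] [NormedSpace K E]
    [IsUltrametricDist E] [FiniteDimensional K E]
    (n : ℕ) (hn : finrank K E = n)
    (hquot : ∀ F : Submodule K E, finrank K (E ⧸ F) = 2 →
      ∀ u v : E ⧸ F, u ≠ 0 → v ≠ 0 → Submodule.span K {u, v} = ⊤ →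
        ¬ ∀ l m : K, ‖l • u + m • v‖ = max ‖l • u‖ ‖m • v‖) :
    ∀ G₁ G₂ : Submodule K E, finrank K G₁ = n - 1 → finrank K G₂ = n - 1 →
      ∃ T : G₁ ≃ₗ[K] G₂, ∀ v : G₁, ‖(T v : E)‖ = ‖(v : E)‖ := by
  intro G₁ G₂ hG₁ hG₂
  rcases eq_or_ne G₁ G₂ with rfl | hne
  · exact ⟨LinearEquiv.refl K G₁, fun v => rfl⟩
  rcases Nat.eq_zero_or_pos (n - 1) with h0 | hpos
  · exact absurd (by rw [Submodule.finrank_eq_zero.mp (hG₁.trans h0),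
      Submodule.finrank_eq_zero.mp (hG₂.trans h0)]) hne
  have hn2 : 2 ≤ n := by omega
  -- pick points separating the hyperplanes
  have hnle₁ : ¬ G₁ ≤ G₂ := fun h =>
    hne (Submodule.eq_of_le_of_finrank_eq h (hG₁.trans hG₂.symm))
  have hnle₂ : ¬ G₂ ≤ G₁ := fun h =>
    hne (Submodule.eq_of_le_of_finrank_eq h (hG₂.trans hG₁.symm)).symm
  obtain ⟨x₁, hx₁G₁, hx₁G₂⟩ := SetLike.not_le_iff_exists.mp hnle₁
  obtain ⟨x₂, hx₂G₂, hx₂G₁⟩ := SetLike.not_le_iff_exists.mp hnle₂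
  set F : Submodule K E := G₁ ⊓ G₂ with hFdef
  have hsup : G₁ ⊔ G₂ = ⊤ := by
    apply Submodule.eq_top_of_finrank_eq
    have hlt : G₁ < G₁ ⊔ G₂ :=
      lt_of_le_of_ne le_sup_left (fun h => hx₂G₁ (h ▸ Submodule.mem_sup_right hx₂G₂))
    have h1 : finrank K G₁ < finrank K ↥(G₁ ⊔ G₂) :=
      Submodule.finrank_lt_finrank_of_lt hlt
    have h2 : finrank K ↥(G₁ ⊔ G₂) ≤ finrank K E := Submodule.finrank_le _
    omega
  have hFrank : finrank K F = n - 2 := by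
    have := Submodule.finrank_sup_add_finrank_inf_eq G₁ G₂
    rw [hsup, finrank_top, hn, hG₁, hG₂, ← hFdef] at this
    omega
  have hQrank : finrank K (E ⧸ F) = 2 := by
    have := F.finrank_quotient_add_finrank
    rw [hn, hFrank] at this
    omega
  have hx₁F : x₁ ∉ F := fun h => hx₁G₂ h.2
  have hx₂F : x₂ ∉ F := fun h => hx₂G₁ h.1
  set u : E ⧸ F := Submodule.Quotient.mk x₁ with hu_def
  set v : E ⧸ F := Submodule.Quotient.mk x₂ with hv_def
  have hu : u ≠ 0 := fun h => hx₁F ((Submodule.Quotient.mk_eq_zero F).mp h)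
  have hv : v ≠ 0 := fun h => hx₂F ((Submodule.Quotient.mk_eq_zero F).mp h)
  have hvu : v ∉ Submodule.span K {u} := by
    intro h
    obtain ⟨a, ha⟩ := Submodule.mem_span_singleton.mp h
    have : x₂ - a • x₁ ∈ F := by
      rw [← Submodule.Quotient.mk_eq_zero F]
      rw [Submodule.Quotient.mk_sub, Submodule.Quotient.mk_smul, ← hu_def, ← hv_def, ha,
        sub_self]
    exact hx₂G₁ (by simpa using G₁.add_mem this.1 (G₁.smul_mem a hx₁G₁))
  have hind : LinearIndependent K ![u, v] := by
    rw [LinearIndependent.pair_iff]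
    intro s t hst
    rcases eq_or_ne t 0 with rfl | ht
    · rw [zero_smul, add_zero] at hst
      rcases (smul_eq_zero.mp hst) with hs | h
      · exact ⟨hs, rfl⟩
      · exact absurd h hu
    · exfalso
      apply hvu
      rw [Submodule.mem_span_singleton]
      refine ⟨-(t⁻¹ * s), ?_⟩
      have h1 : t • v = -(s • u) := by
        rw [eq_neg_iff_add_eq_zero, add_comm]; exact hst
      calc (-(t⁻¹ * s)) • u = t⁻¹ • (-(s • u)) := by module
        _ = t⁻¹ • (t • v) := by rw [← h1]
        _ = v := by rw [smul_smul, inv_mul_cancel₀ ht, one_smul]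
  have hrange : Set.range ![u, v] = {u, v} := by
    have h : Set.range ![u, v] = {v, u} := by simp [Matrix.range_cons, Matrix.range_empty]
    rw [h, Set.pair_comm]
  have hspan : Submodule.span K {u, v} = ⊤ := by
    apply Submodule.eq_top_of_finrank_eq
    rw [← hrange, finrank_span_eq_card hind, hQrank]
    simp
  have hnot := hquot F hQrank u v hu hv hspan
  push_neg at hnot
  obtain ⟨l, m, hlm⟩ := hnot
  haveI : IsUltrametricDist (E ⧸ F) := aux_ultra_quot F
  have hlt : ‖l • u + m • v‖ < max ‖l • u‖ ‖m • v‖ :=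
    lt_of_le_of_ne (IsUltrametricDist.norm_add_le_max _ _) hlm
  have heq : ‖l • u‖ = ‖m • v‖ := IsUltrametricDist.norm_eq_of_add_norm_lt_max hlt
  have hmaxpos : 0 < ‖l • u‖ := by
    rcases le_or_gt ‖l • u‖ 0 with h | h
    · exfalso
      have : max ‖l • u‖ ‖m • v‖ ≤ 0 := by rw [← heq]; simpa using h
      exact absurd (lt_of_lt_of_le hlt this) (not_lt.mpr (norm_nonneg _))
    · exact h
  have hl : l ≠ 0 := by
    rintro rfl
    simp at hmaxpos
  set c : K := l⁻¹ * m with hc_def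
  have hmax : max ‖l • u‖ ‖m • v‖ = ‖l • u‖ := by rw [← heq, max_self]
  have hkey : ‖u + c • v‖ < ‖u‖ := by
    have h1 : l • (u + c • v) = l • u + m • v := by
      rw [smul_add, smul_smul, hc_def, mul_inv_cancel_left₀ hl]
    have h2 : ‖l • (u + c • v)‖ = ‖l‖ * ‖u + c • v‖ := norm_smul l _
    have h3 : ‖l • u‖ = ‖l‖ * ‖u‖ := norm_smul l u
    have hlpos : 0 < ‖l‖ := norm_pos_iff.mpr hl
    have h4 : ‖l‖ * ‖u + c • v‖ < ‖l‖ * ‖u‖ := by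
      rw [← h2, h1, ← h3]
      exact hmax ▸ hlt
    exact lt_of_mul_lt_mul_left h4 hlpos.le
  -- lift u + c • v to a small element w
  set d : E := x₁ + c • x₂ with hd_def
  have hmkd : (Submodule.Quotient.mk d : E ⧸ F) = u + c • v := by
    rw [hd_def, Submodule.Quotient.mk_add, Submodule.Quotient.mk_smul]
  have hdlt : ‖(Submodule.Quotient.mk d : E ⧸ F)‖ < ‖u‖ := by rw [hmkd]; exact hkey
  obtain ⟨w, hw, hnw⟩ := Submodule.Quotient.norm_mk_lt
    (Submodule.Quotient.mk d : E ⧸ F) (sub_pos.mpr hdlt)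
  have hwlt : ‖w‖ < ‖u‖ := by
    have h : ‖(Submodule.Quotient.mk d : E ⧸ F)‖ + (‖u‖ - ‖(Submodule.Quotient.mk d : E ⧸ F)‖) = ‖u‖ := by ring
    rw [h] at hnw
    exact hnw
  have hdw : d - w ∈ F := (Submodule.Quotient.eq F).mp hw.symm
  -- y₂ := x₁ - w lies in G₂
  have hy₂ : x₁ - w ∈ G₂ := by
    have h1 : x₁ - w = -(c • x₂) + (d - w) := by rw [hd_def]; abel
    rw [h1]
    exact G₂.add_mem (G₂.neg_mem (G₂.smul_mem c hx₂G₂)) hdw.2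
  -- basis of the quotient and the coordinate functional
  set B : Basis (Fin 2) K (E ⧸ F) :=
    Basis.mk hind (by rw [hrange, hspan]) with hB_def
  set φ : (E ⧸ F) →ₗ[K] K := B.coord 0 with hφ_def
  have hφu : φ u = 1 := by
    have hB0 : B 0 = u := by rw [hB_def, Basis.mk_apply]; rfl
    rw [hφ_def, ← hB0, Basis.coord_apply, Basis.repr_self]
    simp
  set T₀ : E →ₗ[K] E := LinearMap.id - LinearMap.smulRight (φ.comp F.mkQ) w with hT₀_def
  have hT₀_apply : ∀ x : E, T₀ x = x - φ (Submodule.Quotient.mk x) • w := by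
    intro x
    rw [hT₀_def]
    simp [Submodule.mkQ_apply]
  -- decomposition of G₁
  have hG₁eq : F ⊔ Submodule.span K {x₁} = G₁ := by
    apply Submodule.eq_of_le_of_finrank_le
    · exact sup_le inf_le_left ((Submodule.span_singleton_le_iff_mem x₁ G₁).mpr hx₁G₁)
    · rw [hG₁]
      have hltF : F < F ⊔ Submodule.span K {x₁} :=
        lt_of_le_of_ne le_sup_left (fun h => hx₁F
          (h ▸ Submodule.mem_sup_right (Submodule.mem_span_singleton_self x₁)))
      have := Submodule.finrank_lt_finrank_of_lt hltF
      omega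
  -- the key pointwise claim
  have key : ∀ g : E, g ∈ G₁ → T₀ g ∈ G₂ ∧ ‖T₀ g‖ = ‖g‖ := by
    intro g hg
    rw [← hG₁eq] at hg
    obtain ⟨f, hf, z, hz, rfl⟩ := Submodule.mem_sup.mp hg
    obtain ⟨a, rfl⟩ := Submodule.mem_span_singleton.mp hz
    have hmk : (Submodule.Quotient.mk (f + a • x₁) : E ⧸ F) = a • u := by
      rw [Submodule.Quotient.mk_add, Submodule.Quotient.mk_smul,
        (Submodule.Quotient.mk_eq_zero F).mpr hf, zero_add, hu_def]
    have hφg : φ (Submodule.Quotient.mk (f + a • x₁)) = a := by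
      rw [hmk, map_smul, hφu, smul_eq_mul, mul_one]
    constructor
    · rw [hT₀_apply, hφg]
      have h1 : f + a • x₁ - a • w = f + a • (x₁ - w) := by
        rw [smul_sub]; abel
      rw [h1]
      exact G₂.add_mem hf.2 (G₂.smul_mem a hy₂)
    · rw [hT₀_apply, hφg]
      rcases eq_or_ne a 0 with rfl | ha
      · simp
      · apply aux_norm_sub_eq_left
        have h1 : ‖a • w‖ < ‖a • u‖ := by
          rw [norm_smul, norm_smul]
          exact mul_lt_mul_of_pos_left hwlt (by simp [norm_pos_iff, ha])
        have h2 : ‖a • u‖ ≤ ‖f + a • x₁‖ := by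
          rw [← hmk]
          exact Submodule.Quotient.norm_mk_le F _
        exact lt_of_lt_of_le h1 h2
  -- assemble the linear equivalence
  set Tlin : G₁ →ₗ[K] G₂ :=
    LinearMap.codRestrict G₂ (T₀.domRestrict G₁) (fun g => (key g g.2).1) with hTlin_def
  have hTnorm : ∀ g : G₁, ‖(Tlin g : E)‖ = ‖(g : E)‖ := by
    intro g
    rw [hTlin_def]
    exact (key g g.2).2
  have hinj : Function.Injective Tlin := by
    rw [injective_iff_map_eq_zero]
    intro g hg
    have h1 : ‖(g : E)‖ = 0 := by
      rw [← hTnorm g, hg]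
      simp
    ext
    simpa using norm_eq_zero.mp h1
  refine ⟨Tlin.linearEquivOfInjective hinj (by rw [hG₁, hG₂]), fun g => ?_⟩
  rw [LinearMap.linearEquivOfInjective_apply]
  exact hTnorm g
end

section
/- Let K be a complete non-archimedean nontrivially valued field, not spherically complete, with spherically complete immediate extension K^∨, and let π : K^∨ → K^∨/K be the quotient map. Let x₁,...,xₙ, y₁,...,yₙ ∈ K^∨ \ K with {π(x₁),...,π(xₙ)} orthogonal in K^∨/K and |x_i − y_i| ≤ d(x_i,K) for each i. Then the K-linear map span_K{1, x₁,...,xₙ} → span_K{1, y₁,...,yₙ} sending 1 ↦ 1 and x_i ↦ y_i is an isometry (with both spaces normed by the restriction of |·| on K^∨), and {π(y₁),...,π(yₙ)} is also orthogonal. -/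
open Metric

lemma my_le_infDist {X : Type*} [MetricSpace X] {s : Set X} (hs : s.Nonempty) {x : X} {b : ℝ}
    (h : ∀ y ∈ s, b ≤ dist x y) : b ≤ Metric.infDist x s := by
  by_contra hlt
  obtain ⟨y, hy, hd⟩ := (Metric.infDist_lt_iff hs).mp (not_le.mp hlt)
  exact absurd (h y hy) (not_le.mpr hd)

theorem stmt12 {K Kv : Type*} [NontriviallyNormedField K] [CompleteSpace K]
    [IsUltrametricDist K] [NormedField Kv] [IsUltrametricDist Kv] [Algebra K Kv]
    (hiso : ∀ a : K, ‖algebraMap K Kv a‖ = ‖a‖)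
    (hKns : ¬ SphericallyComplete K)
    (hsph : SphericallyComplete Kv)
    (himm : ∀ z : Kv, z ≠ 0 → ∃ a : K, ‖z - algebraMap K Kv a‖ < ‖z‖)
    (n : ℕ) (x y : Fin n → Kv)
    (hx : ∀ i, x i ∉ Set.range (algebraMap K Kv))
    (hy : ∀ i, y i ∉ Set.range (algebraMap K Kv))
    (horth : ∀ c : Fin n → K,
      Metric.infDist (∑ i, algebraMap K Kv (c i) * x i) (Set.range (algebraMap K Kv)) =
        ⨆ i, ‖c i‖ * Metric.infDist (x i) (Set.range (algebraMap K Kv)))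
    (hclose : ∀ i, ‖x i - y i‖ ≤ Metric.infDist (x i) (Set.range (algebraMap K Kv))) :
    (∀ (l : K) (c : Fin n → K),
      ‖algebraMap K Kv l + ∑ i, algebraMap K Kv (c i) * x i‖ =
        ‖algebraMap K Kv l + ∑ i, algebraMap K Kv (c i) * y i‖) ∧
    ∀ c : Fin n → K,
      Metric.infDist (∑ i, algebraMap K Kv (c i) * y i) (Set.range (algebraMap K Kv)) =
        ⨆ i, ‖c i‖ * Metric.infDist (y i) (Set.range (algebraMap K Kv)) := by
  set f := algebraMap K Kv with hf
  set S := Set.range f with hS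
  have hne : S.Nonempty := ⟨f 0, ⟨0, rfl⟩⟩
  have hfi : Isometry f := AddMonoidHomClass.isometry_of_norm f hiso
  have hclosed : IsClosed S := hfi.isClosedEmbedding.isClosed_range
  -- distance from z to S is bounded by ‖z - f a‖
  have hdle : ∀ (z : Kv) (a : K), infDist z S ≤ ‖z - f a‖ := fun z a => by
    simpa [dist_eq_norm] using infDist_le_dist_of_mem (x := z) (Set.mem_range_self a)
  -- for z ∉ S the distance is not attained
  have hstrict : ∀ z ∉ S, ∀ a : K, infDist z S < ‖z - f a‖ := by
    intro z hz a
    have hzne : z - f a ≠ 0 := by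
      intro h; exact hz ⟨a, by linear_combination (norm := module) -h⟩
    obtain ⟨b, hb⟩ := himm _ hzne
    calc infDist z S ≤ ‖z - f (a + b)‖ := hdle z (a + b)
      _ = ‖z - f a - f b‖ := by rw [map_add]; ring_nf
      _ < ‖z - f a‖ := hb
  have hpos : ∀ z ∉ S, 0 < infDist z S := fun z hz =>
    (hclosed.notMem_iff_infDist_pos hne).mp hz
  -- part 1
  have part1 : ∀ (l : K) (c : Fin n → K),
      ‖f l + ∑ i, f (c i) * x i‖ = ‖f l + ∑ i, f (c i) * y i‖ := by
    intro l c
    by_cases hc : ∀ i, c i = 0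
    · simp [hc]
    · push_neg at hc
      obtain ⟨j, hj⟩ := hc
      have hbdd : BddAbove (Set.range fun i => ‖c i‖ * infDist (x i) S) :=
        Set.Finite.bddAbove (Set.finite_range _)
      have hjle : ‖c j‖ * infDist (x j) S ≤ ⨆ i, ‖c i‖ * infDist (x i) S :=
        le_ciSup hbdd j
      have hsum_notin : (∑ i, f (c i) * x i) ∉ S := by
        intro hmem
        have h0 : infDist (∑ i, f (c i) * x i) S = 0 := infDist_zero_of_mem hmem
        have : 0 < ‖c j‖ * infDist (x j) S :=
          mul_pos (norm_pos_iff.mpr hj) (hpos _ (hx j))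
        rw [horth c] at h0
        exact absurd (h0 ▸ (this.trans_le hjle)) (lt_irrefl 0)
      have hSnorm : infDist (∑ i, f (c i) * x i) S < ‖f l + ∑ i, f (c i) * x i‖ := by
        have := hstrict _ hsum_notin (-l)
        rw [map_neg, sub_neg_eq_add, add_comm] at this
        exact this
      -- the difference is small
      have hdiff : ‖∑ i, f (c i) * (y i - x i)‖ ≤ infDist (∑ i, f (c i) * x i) S := by
        rw [horth c]
        refine IsUltrametricDist.norm_sum_le_of_forall_le_of_nonneg
          (le_trans (mul_nonneg (norm_nonneg _) Metric.infDist_nonneg) hjle) ?_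
        intro i _
        calc ‖f (c i) * (y i - x i)‖ = ‖c i‖ * ‖y i - x i‖ := by
              rw [norm_mul, hiso]
          _ ≤ ‖c i‖ * infDist (x i) S := by
              refine mul_le_mul_of_nonneg_left ?_ (norm_nonneg _)
              rw [norm_sub_rev]; exact hclose i
          _ ≤ ⨆ i, ‖c i‖ * infDist (x i) S := le_ciSup hbdd i
      have hlt : ‖∑ i, f (c i) * (y i - x i)‖ < ‖f l + ∑ i, f (c i) * x i‖ :=
        lt_of_le_of_lt hdiff hSnorm
      have hrw : f l + ∑ i, f (c i) * y i =
          (f l + ∑ i, f (c i) * x i) + ∑ i, f (c i) * (y i - x i) := by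
        rw [add_assoc, ← Finset.sum_add_distrib]
        congr 1
        exact Finset.sum_congr rfl fun i _ => by ring
      rw [hrw]
      exact ((IsUltrametricDist.norm_add_eq_max_of_norm_ne_norm
        (ne_of_gt hlt)).trans (max_eq_left hlt.le)).symm
  refine ⟨part1, ?_⟩
  -- distances agree pointwise
  have hdxy : ∀ i, infDist (x i) S = infDist (y i) S := by
    intro i
    have hnorm : ∀ a : K, ‖y i - f a‖ = ‖x i - f a‖ := by
      intro a
      have h1 : ‖x i - y i‖ < ‖x i - f a‖ := lt_of_le_of_lt (hclose i) (hstrict _ (hx i) a)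
      have hrw : y i - f a = (x i - f a) + -(x i - y i) := by ring
      rw [hrw, IsUltrametricDist.norm_add_eq_max_of_norm_ne_norm
        (by rw [norm_neg]; exact ne_of_gt h1), norm_neg]
      exact max_eq_left h1.le
    apply le_antisymm
    · refine my_le_infDist hne ?_
      rintro w ⟨a, rfl⟩
      rw [dist_eq_norm, hnorm a]
      exact hdle _ a
    · refine my_le_infDist hne ?_
      rintro w ⟨a, rfl⟩
      rw [dist_eq_norm, ← hnorm a]
      exact hdle _ a
  intro c
  have hxy_dist : infDist (∑ i, f (c i) * y i) S = infDist (∑ i, f (c i) * x i) S := by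
    have hnorm : ∀ a : K, ‖(∑ i, f (c i) * y i) - f a‖ = ‖(∑ i, f (c i) * x i) - f a‖ := by
      intro a
      have := part1 (-a) c
      rw [map_neg] at this
      calc ‖(∑ i, f (c i) * y i) - f a‖ = ‖-f a + ∑ i, f (c i) * y i‖ := by ring_nf
        _ = ‖-f a + ∑ i, f (c i) * x i‖ := this.symm
        _ = ‖(∑ i, f (c i) * x i) - f a‖ := by ring_nf
    apply le_antisymm
    · refine my_le_infDist hne ?_
      rintro w ⟨a, rfl⟩
      rw [dist_eq_norm, ← hnorm a]
      exact hdle _ a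
    · refine my_le_infDist hne ?_
      rintro w ⟨a, rfl⟩
      rw [dist_eq_norm, hnorm a]
      exact hdle _ a
  rw [hxy_dist, horth c]
  exact iSup_congr fun i => by rw [hdxy i]
end

section
/- Let K be a complete non-archimedean nontrivially valued field, F a finite-dimensional K-normed space, t > 0, and E = (K, t|·|) ⊕ F with max norm. Then every m-dimensional subspace E₁ of E (1 ≤ m ≤ dim F) satisfies at least one of: (a) the restriction of the projection E → F to E₁ is an isometry; (b) E₁ is isometrically isomorphic to (K, t|·|) ⊕ F₁ (max norm) for some (m−1)-dimensional subspace F₁ of F. -/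
open Module

theorem stmt16 {K F : Type*} [NontriviallyNormedField K] [CompleteSpace K]
    [IsUltrametricDist K] [NormedAddCommGroup F] [NormedSpace K F]
    [IsUltrametricDist F] [FiniteDimensional K F]
    (t : ℝ) (ht : 0 < t) (m : ℕ) (hm1 : 1 ≤ m) (hm2 : m ≤ finrank K F)
    (E₁ : Submodule K (K × F)) (hE₁ : finrank K E₁ = m) :
    -- (a) the second projection restricted to `E₁` is an isometry, or
    (∀ v ∈ E₁, max (t * ‖(v : K × F).1‖) ‖(v : K × F).2‖ = ‖(v : K × F).2‖) ∨
    -- (b) `E₁ ≅ (K, t|·|) ⊕ F₁` for some `(m-1)`-dimensional subspace `F₁ ⊆ F`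
    ∃ F₁ : Submodule K F, finrank K F₁ = m - 1 ∧
      ∃ T : E₁ ≃ₗ[K] K × F₁,
        ∀ v : E₁, max (t * ‖(v : K × F).1‖) ‖(v : K × F).2‖ =
          max (t * ‖(T v).1‖) ‖((T v).2 : F)‖ := by
  by_cases h : ∀ v ∈ E₁, t * ‖(v : K × F).1‖ ≤ ‖(v : K × F).2‖
  · exact Or.inl fun v hv => max_eq_right (h v hv)
  right
  push_neg at h
  obtain ⟨v₀, hv₀, hlt⟩ := h
  have ha₀ : v₀.1 ≠ 0 := by
    intro h0
    rw [h0, norm_zero, mul_zero] at hlt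
    exact absurd hlt (not_lt.2 (norm_nonneg _))
  have hpos : 0 < ‖v₀.1‖ := norm_pos_iff.2 ha₀
  set u : F := v₀.1⁻¹ • v₀.2 with hu_def
  have hw : ((1 : K), u) ∈ E₁ := by
    have hs := E₁.smul_mem v₀.1⁻¹ hv₀
    have heq : v₀.1⁻¹ • v₀ = ((1 : K), u) := by
      ext
      · simp [inv_mul_cancel₀ ha₀]
      · rfl
    rwa [heq] at hs
  have hu : ‖u‖ ≤ t := by
    have h1 : ‖u‖ = ‖v₀.1‖⁻¹ * ‖v₀.2‖ := by rw [hu_def, norm_smul, norm_inv]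
    rw [h1, inv_mul_le_iff₀ hpos, mul_comm]
    exact hlt.le
  set F₁ : Submodule K F := E₁.comap (LinearMap.inr K K F) with hF₁
  have hmem : ∀ v : E₁, (v : K × F).2 - (v : K × F).1 • u ∈ F₁ := by
    intro v
    have heq : ((0 : K), (v : K × F).2 - (v : K × F).1 • u)
        = (v : K × F) - (v : K × F).1 • ((1 : K), u) := by
      ext <;> simp
    show ((0 : K), (v : K × F).2 - (v : K × F).1 • u) ∈ E₁
    rw [heq]
    exact E₁.sub_mem v.2 (E₁.smul_mem _ hw)
  let f : E₁ →ₗ[K] K × F₁ :=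
    { toFun := fun v => ((v : K × F).1, ⟨(v : K × F).2 - (v : K × F).1 • u, hmem v⟩)
      map_add' := by
        intro a b
        ext
        · rfl
        · show ((a : K × F) + b).2 - ((a : K × F) + b).1 • u = _
          simp [add_smul]
          abel
      map_smul' := by
        intro c a
        ext
        · rfl
        · show (c • (a : K × F)).2 - (c • (a : K × F)).1 • u = _
          simp [smul_sub, mul_smul] }
  have hbij : Function.Bijective f := by
    constructor
    · intro a b hab
      have h1 : (a : K × F).1 = (b : K × F).1 := congrArg (fun p : K × F₁ => p.1) hab
      have h2 : (a : K × F).2 - (a : K × F).1 • u = (b : K × F).2 - (b : K × F).1 • u := by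
        have := congrArg (fun p : K × F₁ => ((p.2 : F₁) : F)) hab
        exact this
      have : (a : K × F) = (b : K × F) := by
        ext
        · exact h1
        · rw [h1] at h2
          exact sub_left_injective h2
      exact Subtype.ext this
    · rintro ⟨a, x, hx⟩
      have hmemv : a • ((1 : K), u) + ((0 : K), x) ∈ E₁ :=
        E₁.add_mem (E₁.smul_mem _ hw) hx
      refine ⟨⟨a • ((1 : K), u) + ((0 : K), x), hmemv⟩, ?_⟩
      ext
      · show (a • ((1 : K), u) + ((0 : K), x)).1 = a
        simp
      · show (a • ((1 : K), u) + ((0 : K), x)).2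
            - (a • ((1 : K), u) + ((0 : K), x)).1 • u = x
        simp
  refine ⟨F₁, ?_, LinearEquiv.ofBijective f hbij, ?_⟩
  · have hfr : finrank K E₁ = finrank K (K × F₁) :=
      (LinearEquiv.ofBijective f hbij).finrank_eq
    rw [hE₁, Module.finrank_prod, Module.finrank_self] at hfr
    omega
  · intro v
    show max (t * ‖(v : K × F).1‖) ‖(v : K × F).2‖
      = max (t * ‖(v : K × F).1‖) ‖(v : K × F).2 - (v : K × F).1 • u‖
    have hau : ‖(v : K × F).1 • u‖ ≤ t * ‖(v : K × F).1‖ := by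
      rw [norm_smul, mul_comm]
      exact mul_le_mul_of_nonneg_right hu (norm_nonneg _)
    apply le_antisymm
    · apply max_le (le_max_left _ _)
      have : ‖(v : K × F).2‖ = ‖((v : K × F).2 - (v : K × F).1 • u) + (v : K × F).1 • u‖ := by
        rw [sub_add_cancel]
      rw [this]
      refine (IsUltrametricDist.norm_add_le_max _ _).trans ?_
      rw [max_comm]
      exact max_le_max hau le_rfl
    · apply max_le (le_max_left _ _)
      have hsub : ‖(v : K × F).2 - (v : K × F).1 • u‖
          ≤ max ‖(v : K × F).2‖ ‖(v : K × F).1 • u‖ := by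
        rw [sub_eq_add_neg]
        refine (IsUltrametricDist.norm_add_le_max _ _).trans ?_
        rw [norm_neg]
      refine hsub.trans ?_
      rw [max_comm]
      exact (max_le_max hau le_rfl).trans (by rw [max_comm])
end

section
/- Let K be a complete non-archimedean nontrivially valued field, not spherically complete, and let (F, ‖·‖_F), (G, ‖·‖_G) be finite-dimensional indecomposable K-normed spaces with dim F ≥ 2. Let t₁,...,t_m, s₁,...,sₙ > 0. If (Kᵐ, max t_i|·|) ⊕ F is isometrically isomorphic to (Kⁿ, max s_j|·|) ⊕ G (with max norms throughout), then m = n, (Kᵐ, max t_i|·|) ≅ (Kⁿ, max s_j|·|), and F ≅ G. -/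
open Module

/-- A normed space is indecomposable if it does not split as an internal direct sum
of two nonzero subspaces on which the norm is the max norm. -/
def Indecomposable' (K F : Type*) [NormedField K] [NormedAddCommGroup F]
    [NormedSpace K F] : Prop :=
  ¬ ∃ D₁ D₂ : Submodule K F, D₁ ≠ ⊥ ∧ D₂ ≠ ⊥ ∧ D₁ ⊔ D₂ = ⊤ ∧
    ∀ v₁ ∈ D₁, ∀ v₂ ∈ D₂, ‖v₁ + v₂‖ = max ‖v₁‖ ‖v₂‖

/-!
Induct on `m`. Let `e` be the first basis vector of `Kᵐ`, of norm `t₀`. A linear functional `φ`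
with `φ e = 1` and `t₀ ‖φ v‖ ≤ ‖v‖` splits the line `K e` off orthogonally with complement
`ker φ`, and any two such complements are isometric (project along `e`). Hence an isometry
`K_c ⊕ X ≅ K_d ⊕ Y` sending `e` to a vector whose first coordinate has full norm cancels to
`X ≅ Y`.

If some coordinate of `T e` has full weight `t₀`, this removes one weighted coordinate on each
side and the induction hypothesis applies. Otherwise the `G`-component `g₀` of `T e` has norm
`t₀`; the first coordinate of `T⁻¹`, restricted to `G` and rescaled, is such a functional for
`g₀` (the ultrametric inequality in `K` keeps the rescaling factor of norm `≥ 1`), so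
indecomposability forces `G = K g₀`. Cancelling then leaves `Kᵐ⁻¹ ⊕ F` isometric to a weighted
`Kⁿ`, which is impossible: cancelling coordinates again would make `F` itself a weighted
`K^{dim F}`, which decomposes since `dim F ≥ 2`.
-/

namespace Fin

variable (R : Type*) {M : Type*} [Semiring R] [AddCommMonoid M] [Module R M] {n : ℕ}

def insertNthLinearEquiv (j : Fin (n + 1)) : (M × (Fin n → M)) ≃ₗ[R] (Fin (n + 1) → M) where
  __ := Fin.insertNthEquiv (fun _ => M) j
  map_add' x y := Fin.insertNth_add (α := fun _ => M) j x.1 y.1 x.2 y.2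
  map_smul' c x := by
    funext k
    induction k using Fin.succAboveCases j <;> simp

variable {R}

theorem insertNthLinearEquiv_apply (j : Fin (n + 1)) (z : M × (Fin n → M)) :
    insertNthLinearEquiv R j z = (j.insertNth z.1 z.2 : Fin (n + 1) → M) := rfl

end Fin

section WeightedNorm

variable {K ι V : Type*} [NormedField K]

noncomputable def weightedNorm (t : ι → ℝ) (x : ι → K) : ℝ := ⨆ i, t i * ‖x i‖

theorem weightedNorm_nonneg {t : ι → ℝ} (ht : ∀ i, 0 ≤ t i) (x : ι → K) :
    0 ≤ weightedNorm t x :=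
  Real.iSup_nonneg fun i => mul_nonneg (ht i) (norm_nonneg _)

@[simp]
theorem weightedNorm_zero (t : ι → ℝ) : weightedNorm t (0 : ι → K) = 0 := by
  simp [weightedNorm]

theorem weightedNorm_of_isEmpty [IsEmpty ι] (t : ι → ℝ) (x : ι → K) : weightedNorm t x = 0 :=
  Real.iSup_of_isEmpty _

theorem mul_norm_le_weightedNorm [Finite ι] (t : ι → ℝ) (x : ι → K) (i : ι) :
    t i * ‖x i‖ ≤ weightedNorm t x :=
  le_ciSup (f := fun i => t i * ‖x i‖) (Set.finite_range _).bddAbove i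

theorem exists_weightedNorm_eq [Finite ι] [Nonempty ι] (t : ι → ℝ) (x : ι → K) :
    ∃ i, weightedNorm t x = t i * ‖x i‖ :=
  let ⟨i, hi⟩ := Finite.exists_max fun i => t i * ‖x i‖
  ⟨i, le_antisymm (ciSup_le hi) (mul_norm_le_weightedNorm t x i)⟩

theorem weightedNorm_insertNth {n : ℕ} {t : Fin (n + 1) → ℝ} (ht : ∀ i, 0 ≤ t i)
    (j : Fin (n + 1)) (a : K) (x : Fin n → K) :
    weightedNorm t (j.insertNth a x) = max (t j * ‖a‖) (weightedNorm (t ∘ j.succAbove) x) := by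
  apply le_antisymm
  · refine ciSup_le fun i => ?_
    cases i using Fin.succAboveCases j with
    | x => simp
    | p k =>
      simpa using le_max_of_le_right (mul_norm_le_weightedNorm (t ∘ j.succAbove) x k)
  · refine max_le (by simpa using mul_norm_le_weightedNorm t (j.insertNth a x) j) ?_
    exact Real.iSup_le
      (fun k => by simpa using mul_norm_le_weightedNorm t (j.insertNth a x) (j.succAbove k))
      (weightedNorm_nonneg ht _)

theorem weightedNorm_single {n : ℕ} {t : Fin (n + 1) → ℝ} (ht : ∀ i, 0 ≤ t i)
    (j : Fin (n + 1)) (a : K) : weightedNorm t (Pi.single j a) = t j * ‖a‖ := by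
  rw [← Fin.insertNth_zero_right, weightedNorm_insertNth ht, weightedNorm_zero,
    max_eq_left (mul_nonneg (ht j) (norm_nonneg a))]

variable [NormedAddCommGroup V]

noncomputable def weightedProdNorm (t : ι → ℝ) (v : (ι → K) × V) : ℝ :=
  max (weightedNorm t v.1) ‖v.2‖

theorem weightedProdNorm_nonneg (t : ι → ℝ) (v : (ι → K) × V) : 0 ≤ weightedProdNorm t v :=
  le_max_of_le_right (norm_nonneg _)

theorem weightedProdNorm_of_isEmpty [IsEmpty ι] (t : ι → ℝ) (v : (ι → K) × V) :
    weightedProdNorm t v = ‖v.2‖ := by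
  rw [weightedProdNorm, weightedNorm_of_isEmpty, max_eq_right (norm_nonneg _)]

theorem weightedProdNorm_zero_mk (t : ι → ℝ) (w : V) :
    weightedProdNorm t ((0 : ι → K), w) = ‖w‖ := by
  rw [weightedProdNorm, weightedNorm_zero, max_eq_right (norm_nonneg _)]

theorem weightedProdNorm_mk_zero {t : ι → ℝ} (ht : ∀ i, 0 ≤ t i) (x : ι → K) :
    weightedProdNorm t (x, (0 : V)) = weightedNorm t x := by
  rw [weightedProdNorm, norm_zero, max_eq_left (weightedNorm_nonneg ht x)]

theorem weightedProdNorm_single {n : ℕ} {t : Fin (n + 1) → ℝ} (ht : ∀ i, 0 ≤ t i)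
    (j : Fin (n + 1)) (a : K) : weightedProdNorm t (Pi.single j a, (0 : V)) = t j * ‖a‖ := by
  rw [weightedProdNorm_mk_zero ht, weightedNorm_single ht]

variable [Module K V] {n : ℕ}

def insertNthProdEquiv (j : Fin (n + 1)) :
    (K × ((Fin n → K) × V)) ≃ₗ[K] (Fin (n + 1) → K) × V :=
  (LinearEquiv.prodAssoc K K (Fin n → K) V).symm ≪≫ₗ
    (Fin.insertNthLinearEquiv K j).prodCongr (LinearEquiv.refl K V)

theorem insertNthProdEquiv_apply (j : Fin (n + 1)) (z : K × ((Fin n → K) × V)) :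
    insertNthProdEquiv j z = ((j.insertNth z.1 z.2.1 : Fin (n + 1) → K), z.2.2) := rfl

theorem insertNthProdEquiv_one_zero (j : Fin (n + 1)) :
    insertNthProdEquiv j ((1 : K), (0 : (Fin n → K) × V)) = (Pi.single j 1, 0) := by
  rw [insertNthProdEquiv_apply, Prod.fst_zero, Fin.insertNth_zero_right]
  rfl

theorem weightedProdNorm_insertNthProdEquiv {t : Fin (n + 1) → ℝ} (ht : ∀ i, 0 ≤ t i)
    (j : Fin (n + 1)) (z : K × ((Fin n → K) × V)) :
    weightedProdNorm t (insertNthProdEquiv j z) =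
      max (t j * ‖z.1‖) (weightedProdNorm (t ∘ j.succAbove) z.2) := by
  rw [insertNthProdEquiv_apply, weightedProdNorm, weightedProdNorm, weightedNorm_insertNth ht,
    max_assoc]

end WeightedNorm

section LineCancellation

variable {K X Y : Type*} [NormedField K] [AddCommGroup X] [Module K X] [AddCommGroup Y]
  [Module K Y]

theorem exists_isometry_of_isometry_prod {NX : X → ℝ} {NY : Y → ℝ} (hNX : ∀ x, 0 ≤ NX x)
    (hNY : ∀ y, 0 ≤ NY y) {c d : ℝ} (hc : 0 < c) (T : (K × X) ≃ₗ[K] (K × Y))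
    (hT : ∀ z, max (d * ‖(T z).1‖) (NY (T z).2) = max (c * ‖z.1‖) (NX z.2))
    (h1 : d * ‖(T (1, 0)).1‖ = c) :
    ∃ T' : X ≃ₗ[K] Y, ∀ x, NY (T' x) = NX x := by
  set μ := (T (1, 0)).1
  have hμ : μ ≠ 0 := by
    rintro h
    rw [h, norm_zero, mul_zero] at h1
    exact hc.ne h1
  have hfst : ∀ z : K × X, (T z).1 = z.1 * μ + (T (0, z.2)).1 := fun z => by
    have hz : z = z.1 • ((1 : K), (0 : X)) + (0, z.2) := by ext <;> simp
    conv_lhs => rw [hz, map_add, map_smul]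
    rfl
  -- `T'` sends `x` to the second component of `T (-a x, x)`, where `a x` makes the first
  -- component vanish; its inverse is `y ↦ (T⁻¹ (0, y)).2`.
  let a : X →ₗ[K] K := μ⁻¹ • (LinearMap.fst K K Y ∘ₗ T.toLinearMap ∘ₗ LinearMap.inr K K X)
  have ha : ∀ x, a x = μ⁻¹ * (T (0, x)).1 := fun x => rfl
  have hker : ∀ z : K × X, (T z).1 = 0 ↔ z.1 = -a z.2 := fun z => by
    rw [hfst, ha]
    constructor <;> intro h <;> field_simp at h ⊢ <;> linear_combination h
  let f : X →ₗ[K] Y :=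
    LinearMap.snd K K Y ∘ₗ T.toLinearMap ∘ₗ (LinearMap.inr K K X - LinearMap.inl K K X ∘ₗ a)
  have hf : ∀ x, T (-a x, x) = (0, f x) := fun x =>
    Prod.ext ((hker _).2 rfl) (by simp [f, sub_eq_add_neg])
  let g : Y →ₗ[K] X := LinearMap.snd K K X ∘ₗ T.symm.toLinearMap ∘ₗ LinearMap.inr K K Y
  have hgf : ∀ x, g (f x) = x := fun x => by simp [g, ← hf x]
  have hfg : ∀ y, f (g y) = y := fun y => by
    set z := T.symm (0, y)
    have hz : z = (-a (g y), g y) := Prod.ext ((hker z).1 (by simp [z])) rfl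
    simpa [← hz, z] using (hf (g y)).symm
  refine ⟨LinearEquiv.ofLinearMap f g (LinearMap.ext hfg) (LinearMap.ext hgf), fun x => ?_⟩
  have hbound : c * ‖a x‖ ≤ NX x := by
    have := hT (0, x)
    rw [norm_zero, mul_zero, max_eq_right (hNX x)] at this
    calc c * ‖a x‖ = d * ‖(T (0, x)).1‖ := by
          rw [ha, norm_mul, norm_inv, ← h1]; field_simp [norm_ne_zero_iff.2 hμ]
      _ ≤ NX x := this ▸ le_max_left _ _
  have := hT (-a x, x)
  rwa [hf, norm_zero, mul_zero, max_eq_right (hNY _), norm_neg, max_eq_right hbound] at this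

end LineCancellation

section Strip

variable {K V W Y : Type*} [NormedField K] [NormedAddCommGroup V] [Module K V]
  [NormedAddCommGroup W] [Module K W] [AddCommGroup Y] [Module K Y] {m n : ℕ}
  {t : Fin (m + 1) → ℝ} {s : Fin (n + 1) → ℝ}

theorem exists_isometry_of_isometry_succ_prod (ht : ∀ k, 0 ≤ t k) {i : Fin (m + 1)}
    (hti : 0 < t i) {NY : Y → ℝ} (hNY : ∀ y, 0 ≤ NY y) {d : ℝ}
    (T : ((Fin (m + 1) → K) × V) ≃ₗ[K] (K × Y))
    (hT : ∀ v, max (d * ‖(T v).1‖) (NY (T v).2) = weightedProdNorm t v)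
    (h1 : d * ‖(T (Pi.single i 1, 0)).1‖ = t i) :
    ∃ T' : ((Fin m → K) × V) ≃ₗ[K] Y, ∀ v, NY (T' v) = weightedProdNorm (t ∘ i.succAbove) v :=
  exists_isometry_of_isometry_prod (weightedProdNorm_nonneg _) hNY hti
    (insertNthProdEquiv i ≪≫ₗ T)
    (fun z => by rw [LinearEquiv.trans_apply, hT, weightedProdNorm_insertNthProdEquiv ht])
    (by rwa [LinearEquiv.trans_apply, insertNthProdEquiv_one_zero])

theorem exists_isometry_of_isometry_succ_succ (ht : ∀ k, 0 ≤ t k) (hs : ∀ k, 0 ≤ s k)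
    (T : ((Fin (m + 1) → K) × V) ≃ₗ[K] ((Fin (n + 1) → K) × W))
    (hT : ∀ v, weightedProdNorm s (T v) = weightedProdNorm t v) {i : Fin (m + 1)}
    {j : Fin (n + 1)} (hti : 0 < t i) (hij : s j * ‖(T (Pi.single i 1, 0)).1 j‖ = t i) :
    ∃ T' : ((Fin m → K) × V) ≃ₗ[K] ((Fin n → K) × W),
      ∀ v, weightedProdNorm (s ∘ j.succAbove) (T' v) = weightedProdNorm (t ∘ i.succAbove) v :=
  exists_isometry_of_isometry_succ_prod ht hti (weightedProdNorm_nonneg _)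
    (T ≪≫ₗ (insertNthProdEquiv j).symm)
    (fun v => by
      rw [← hT, ← (insertNthProdEquiv j).apply_symm_apply (T v),
        weightedProdNorm_insertNthProdEquiv hs]
      simp)
    hij

theorem exists_isometry_succ_of_isometry (ht : ∀ k, 0 ≤ t k) (hs : ∀ k, 0 ≤ s k) {i : Fin (m + 1)}
    {j : Fin (n + 1)} {μ : K} (hμ : μ ≠ 0) (hij : s j * ‖μ‖ = t i)
    (T : (Fin m → K) ≃ₗ[K] (Fin n → K))
    (hT : ∀ x, weightedNorm (s ∘ j.succAbove) (T x) = weightedNorm (t ∘ i.succAbove) x) :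
    ∃ T' : (Fin (m + 1) → K) ≃ₗ[K] (Fin (n + 1) → K),
      ∀ x, weightedNorm s (T' x) = weightedNorm t x := by
  refine ⟨(Fin.insertNthLinearEquiv K i).symm ≪≫ₗ
    (LinearEquiv.smulOfNeZero K K μ hμ).prodCongr T ≪≫ₗ Fin.insertNthLinearEquiv K j,
    fun x => ?_⟩
  obtain ⟨z, rfl⟩ := (Fin.insertNthLinearEquiv K i).surjective x
  rw [LinearEquiv.trans_apply, LinearEquiv.trans_apply, LinearEquiv.symm_apply_apply]
  simp [Fin.insertNthLinearEquiv_apply, weightedNorm_insertNth ht, weightedNorm_insertNth hs, hT,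
    ← mul_assoc, hij]

end Strip

section Indecomposable

variable {K V W Y : Type*} [NormedField K] [NormedAddCommGroup V] [NormedSpace K V]
  [AddCommGroup Y] [Module K Y]

theorem Indecomposable'.subsingleton_of_equiv_prod (hV : Indecomposable' K V) {c : ℝ}
    {NY : Y → ℝ} (hNY : NY 0 = 0) (T : V ≃ₗ[K] K × Y)
    (hT : ∀ v, ‖v‖ = max (c * ‖(T v).1‖) (NY (T v).2)) : Subsingleton Y := by
  by_contra hY
  rw [not_subsingleton_iff_nontrivial] at hY
  obtain ⟨y, hy⟩ := exists_ne (0 : Y)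
  refine hV ⟨LinearMap.ker (LinearMap.snd K K Y ∘ₗ T.toLinearMap),
    LinearMap.ker (LinearMap.fst K K Y ∘ₗ T.toLinearMap), ?_, ?_, ?_, ?_⟩
  · exact (Submodule.ne_bot_iff _).2 ⟨T.symm (1, 0), by simp, by simp⟩
  · exact (Submodule.ne_bot_iff _).2 ⟨T.symm (0, y), by simp, by simpa using hy⟩
  · refine eq_top_iff.2 fun v _ => Submodule.mem_sup.2
      ⟨T.symm ((T v).1, 0), by simp, T.symm (0, (T v).2), by simp, ?_⟩
    rw [← map_add, Prod.mk_add_mk, add_zero, zero_add, Prod.mk.eta, T.symm_apply_apply]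
  · intro v₁ h₁ v₂ h₂
    simp only [LinearMap.mem_ker, LinearMap.coe_comp, Function.comp_apply, LinearEquiv.coe_coe,
      LinearMap.fst_apply, LinearMap.snd_apply] at h₁ h₂
    -- `‖v₁ + v₂‖ ≥ 0` absorbs the zeros contributed by `c * ‖0‖` and `NY 0`
    have h₀ := norm_nonneg (v₁ + v₂)
    rw [hT] at h₀ ⊢
    rw [hT v₁, hT v₂]
    simp only [map_add, Prod.fst_add, Prod.snd_add, h₁, h₂, add_zero, zero_add, norm_zero,
      mul_zero, hNY] at h₀ ⊢
    rw [max_comm 0, max_max_max_comm, max_self, max_eq_left h₀]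

theorem Indecomposable'.finrank_le_one_of_equiv_prod (hV : Indecomposable' K V) {c : ℝ}
    {NY : Y → ℝ} (hNY : NY 0 = 0) (T : V ≃ₗ[K] K × Y)
    (hT : ∀ v, ‖v‖ = max (c * ‖(T v).1‖) (NY (T v).2)) : finrank K V ≤ 1 := by
  have := hV.subsingleton_of_equiv_prod hNY T hT
  have hinj : Function.Injective (LinearMap.fst K K Y ∘ₗ T.toLinearMap) := fun v w h =>
    T.injective (Prod.ext h (Subsingleton.elim _ _))
  simpa using LinearMap.finrank_le_finrank_of_injective hinj

variable [NormedAddCommGroup W] [Module K W]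

theorem Indecomposable'.finrank_le_one_of_isometry (hV : Indecomposable' K V) {n : ℕ}
    {t : Fin 0 → ℝ} {s : Fin (n + 1) → ℝ} (hs : ∀ j, 0 ≤ s j)
    (T : ((Fin 0 → K) × V) ≃ₗ[K] ((Fin (n + 1) → K) × W))
    (hT : ∀ v, weightedProdNorm s (T v) = weightedProdNorm t v) : finrank K V ≤ 1 :=
  hV.finrank_le_one_of_equiv_prod (NY := weightedProdNorm (s ∘ Fin.succAbove 0))
    (by simp [weightedProdNorm])
    (LinearEquiv.uniqueProd.symm ≪≫ₗ T ≪≫ₗ (insertNthProdEquiv 0).symm) fun v => by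
      rw [← weightedProdNorm_insertNthProdEquiv hs, LinearEquiv.trans_apply,
        LinearEquiv.apply_symm_apply, LinearEquiv.trans_apply, hT, weightedProdNorm_of_isEmpty]
      rfl

theorem Indecomposable'.not_exists_isometry_prod_subsingleton [Subsingleton W]
    (hV : Indecomposable' K V) (hV2 : 2 ≤ finrank K V) {a b : ℕ} {t : Fin a → ℝ}
    {s : Fin b → ℝ} (ht : ∀ i, 0 < t i) (hs : ∀ j, 0 ≤ s j) :
    ¬ ∃ T : ((Fin a → K) × V) ≃ₗ[K] ((Fin b → K) × W),
      ∀ v, weightedProdNorm s (T v) = weightedProdNorm t v := by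
  induction a generalizing b with
  | zero =>
    rintro ⟨T, hT⟩
    cases b with
    | zero =>
      have := (LinearEquiv.uniqueProd.symm ≪≫ₗ T).finrank_eq.trans finrank_zero_of_subsingleton
      omega
    | succ b =>
      have := hV.finrank_le_one_of_isometry hs T hT
      omega
  | succ a ih =>
    rintro ⟨T, hT⟩
    have he := hT (Pi.single 0 1, 0)
    rw [weightedProdNorm_single (fun i => (ht i).le), norm_one, mul_one, weightedProdNorm,
      Subsingleton.elim (T _).2 0, norm_zero, max_eq_left (weightedNorm_nonneg hs _)] at he
    cases b with
    | zero =>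
      rw [weightedNorm_of_isEmpty] at he
      exact (ht 0).ne he
    | succ b =>
      obtain ⟨j, hj⟩ := exists_weightedNorm_eq s (T (Pi.single 0 1, 0)).1
      exact ih (fun i => ht _) (fun k => hs _)
        (exists_isometry_of_isometry_succ_succ (fun k => (ht k).le) hs T hT (ht 0) (hj ▸ he))

end Indecomposable

section OrthogonalSplitting

open IsUltrametricDist

variable {K G : Type*} [NormedField K] [NormedAddCommGroup G] [NormedSpace K G]
  [IsUltrametricDist G]

theorem exists_equiv_prod_ker (L : G →ₗ[K] K) {g₀ : G} (h1 : L g₀ = 1)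
    (hL : ∀ g, ‖g₀‖ * ‖L g‖ ≤ ‖g‖) :
    ∃ e : G ≃ₗ[K] K × LinearMap.ker L,
      (∀ g, (e g).1 = L g) ∧ ∀ g, ‖g‖ = max (‖g₀‖ * ‖(e g).1‖) ‖(e g).2‖ := by
  let p : G →ₗ[K] LinearMap.ker L :=
    (LinearMap.id - L.smulRight g₀).codRestrict (LinearMap.ker L) fun g => by simp [h1]
  have hp : ∀ g, (p g : G) = g - L g • g₀ := fun g => rfl
  refine ⟨LinearEquiv.ofLinearMap (L.prod p)
    ((LinearMap.toSpanSingleton K G g₀).coprod (LinearMap.ker L).subtype) ?_ ?_,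
    fun g => rfl, fun g => ?_⟩
  · refine LinearMap.ext fun z => Prod.ext ?_ (Subtype.ext ?_)
    · simp [h1, LinearMap.mem_ker.1 z.2.2]
    · simp [hp, h1, LinearMap.mem_ker.1 z.2.2]
  · exact LinearMap.ext fun g => by simp [hp]
  · show ‖g‖ = max (‖g₀‖ * ‖L g‖) ‖g - L g • g₀‖
    have hsmul : ‖L g • g₀‖ = ‖g₀‖ * ‖L g‖ := by rw [norm_smul, mul_comm]
    refine le_antisymm ?_ (max_le (hL g) ?_)
    · calc ‖g‖ = ‖L g • g₀ + (g - L g • g₀)‖ := by rw [add_sub_cancel]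
        _ ≤ _ := hsmul ▸ norm_add_le_max _ _
    · calc ‖g - L g • g₀‖ = ‖g + -(L g • g₀)‖ := by rw [sub_eq_add_neg]
        _ ≤ max ‖g‖ ‖L g • g₀‖ := norm_neg (L g • g₀) ▸ norm_add_le_max _ _
        _ ≤ ‖g‖ := max_le le_rfl (hsmul ▸ hL g)

end OrthogonalSplitting

section Ultrametric

open IsUltrametricDist

variable {K V G : Type*} [NormedField K] [IsUltrametricDist K] [NormedAddCommGroup V]
  [Module K V] [NormedAddCommGroup G] [Module K G] {m n : ℕ} {t : Fin (m + 1) → ℝ}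
  {s : Fin n → ℝ}

theorem exists_norming_functional_of_weightedNorm_lt (hs : ∀ j, 0 ≤ s j)
    (T : ((Fin (m + 1) → K) × V) ≃ₗ[K] ((Fin n → K) × G))
    (hT : ∀ v, weightedProdNorm s (T v) = weightedProdNorm t v) {i : Fin (m + 1)}
    (hlt : weightedNorm s (T (Pi.single i 1, 0)).1 < t i) :
    ∃ L : G →ₗ[K] K, L (T (Pi.single i 1, 0)).2 = 1 ∧ ∀ g, t i * ‖L g‖ ≤ ‖g‖ := by
  set x₀ := (T (Pi.single i 1, 0)).1
  set g₀ := (T (Pi.single i 1, 0)).2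
  have hti : 0 < t i := (weightedNorm_nonneg hs _).trans_lt hlt
  let φ : ((Fin n → K) × G) →ₗ[K] K :=
    LinearMap.proj i ∘ₗ LinearMap.fst K _ V ∘ₗ T.symm.toLinearMap
  have hφ : ∀ y, t i * ‖φ y‖ ≤ weightedProdNorm s y := fun y => by
    rw [← T.apply_symm_apply y, hT, T.apply_symm_apply]
    exact (mul_norm_le_weightedNorm t _ i).trans (le_max_left _ _)
  have hsum : φ (x₀, 0) + φ (0, g₀) = 1 := by
    rw [← map_add, Prod.mk_add_mk, add_zero, zero_add]
    simp [φ, x₀, g₀]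
  have hx₀ : ‖φ (x₀, 0)‖ < 1 := by
    have := (hφ (x₀, 0)).trans_lt ((weightedProdNorm_mk_zero hs x₀).trans_lt hlt)
    exact (mul_lt_iff_lt_one_right hti).1 this
  have hg₀ : 1 ≤ ‖φ (0, g₀)‖ := by
    have := norm_add_le_max (φ (x₀, 0)) (φ (0, g₀))
    rw [hsum, norm_one] at this
    exact (le_max_iff.1 this).resolve_left hx₀.not_ge
  have hg₀' : φ (0, g₀) ≠ 0 := norm_pos_iff.1 (zero_lt_one.trans_le hg₀)
  refine ⟨(φ (0, g₀))⁻¹ • (φ ∘ₗ LinearMap.inr K _ G), by simp [hg₀'], fun g => ?_⟩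
  calc t i * ‖(φ (0, g₀))⁻¹ • φ (0, g)‖
      ≤ t i * ‖φ (0, g)‖ := by
        rw [norm_smul, norm_inv]
        gcongr
        exact mul_le_of_le_one_left (norm_nonneg _) (inv_le_one_of_one_le₀ hg₀)
    _ ≤ weightedProdNorm s (0, g) := hφ _
    _ = ‖g‖ := weightedProdNorm_zero_mk s g

end Ultrametric

section Main

variable {K F G : Type*} [NormedField K] [IsUltrametricDist K] [NormedAddCommGroup F]
  [NormedSpace K F] [NormedAddCommGroup G] [NormedSpace K G] [IsUltrametricDist G] {m n : ℕ}

theorem Indecomposable'.false_of_weightedNorm_lt (hF : Indecomposable' K F)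
    (hF2 : 2 ≤ finrank K F) (hG : Indecomposable' K G) {t : Fin (m + 1) → ℝ}
    {s : Fin n → ℝ} (ht : ∀ i, 0 < t i) (hs : ∀ j, 0 ≤ s j)
    (T : ((Fin (m + 1) → K) × F) ≃ₗ[K] ((Fin n → K) × G))
    (hT : ∀ v, weightedProdNorm s (T v) = weightedProdNorm t v)
    (hlt : weightedNorm s (T (Pi.single 0 1, 0)).1 < t 0) : False := by
  set g₀ := (T (Pi.single 0 1, 0)).2
  have hg₀ : ‖g₀‖ = t 0 := by
    have := hT (Pi.single 0 1, 0)
    rw [weightedProdNorm_single (fun i => (ht i).le), norm_one, mul_one, weightedProdNorm] at this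
    exact ((max_eq_iff.1 this).resolve_left fun h => hlt.ne h.1).1
  obtain ⟨L, hL1, hL⟩ := exists_norming_functional_of_weightedNorm_lt hs T hT hlt
  obtain ⟨e, he1, he⟩ := exists_equiv_prod_ker L hL1 (hg₀ ▸ hL)
  have : Subsingleton (LinearMap.ker L) := hG.subsingleton_of_equiv_prod norm_zero e he
  let eZ : ((Fin n → K) × G) ≃ₗ[K] K × ((Fin n → K) × LinearMap.ker L) :=
    (LinearEquiv.refl K _).prodCongr e ≪≫ₗ (LinearEquiv.prodAssoc K _ K _).symm ≪≫ₗ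
      (LinearEquiv.prodComm K _ K).prodCongr (LinearEquiv.refl K _) ≪≫ₗ
      LinearEquiv.prodAssoc K K _ _
  have hTe : ∀ v, max (‖g₀‖ * ‖(eZ (T v)).1‖) (weightedProdNorm s (eZ (T v)).2) =
      weightedProdNorm t v := fun v => by
    rw [← hT v, weightedProdNorm, weightedProdNorm, he (T v).2, max_left_comm]
    rfl
  have heZ : (eZ (T (Pi.single 0 1, 0))).1 = L g₀ := by rw [← he1]; rfl
  obtain ⟨T', hT'⟩ := exists_isometry_of_isometry_succ_prod (fun k => (ht k).le) (ht 0)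
    (weightedProdNorm_nonneg s) (T ≪≫ₗ eZ) hTe
    (by rw [LinearEquiv.trans_apply, heZ, hL1, norm_one, mul_one, hg₀])
  exact hF.not_exists_isometry_prod_subsingleton hF2 (fun i => ht _) hs ⟨T', hT'⟩

theorem Indecomposable'.exists_isometries_of_isometry_prod (hF : Indecomposable' K F)
    (hF2 : 2 ≤ finrank K F) (hG : Indecomposable' K G) {t : Fin m → ℝ} {s : Fin n → ℝ}
    (ht : ∀ i, 0 < t i) (hs : ∀ j, 0 ≤ s j) (T : ((Fin m → K) × F) ≃ₗ[K] ((Fin n → K) × G))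
    (hT : ∀ v, weightedProdNorm s (T v) = weightedProdNorm t v) :
    m = n ∧
      (∃ T₀ : (Fin m → K) ≃ₗ[K] (Fin n → K), ∀ x, weightedNorm s (T₀ x) = weightedNorm t x) ∧
      ∃ T₁ : F ≃ₗ[K] G, ∀ u, ‖T₁ u‖ = ‖u‖ := by
  induction m generalizing n with
  | zero =>
    cases n with
    | zero =>
      refine ⟨rfl, ⟨LinearEquiv.refl K _, fun x => by simp [weightedNorm_of_isEmpty]⟩,
        LinearEquiv.uniqueProd.symm ≪≫ₗ T ≪≫ₗ LinearEquiv.uniqueProd, fun u => ?_⟩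
      simpa [weightedProdNorm_of_isEmpty] using hT (default, u)
    | succ n =>
      have := hF.finrank_le_one_of_isometry hs T hT
      omega
  | succ m ih =>
    set x₀ := (T (Pi.single 0 1, 0)).1
    have hle : weightedNorm s x₀ ≤ t 0 := calc
      weightedNorm s x₀ ≤ weightedProdNorm s (T (Pi.single 0 1, 0)) := le_max_left _ _
      _ = t 0 := by rw [hT, weightedProdNorm_single (fun i => (ht i).le), norm_one, mul_one]
    rcases hle.lt_or_eq with hlt | heq
    · exact (hF.false_of_weightedNorm_lt hF2 hG ht hs T hT hlt).elim
    cases n with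
    | zero =>
      rw [weightedNorm_of_isEmpty] at heq
      exact ((ht 0).ne heq).elim
    | succ n =>
      obtain ⟨j, hj⟩ := exists_weightedNorm_eq s x₀
      have hj' : s j * ‖x₀ j‖ = t 0 := hj ▸ heq
      have hμ : x₀ j ≠ 0 := fun h => (ht 0).ne' (by rw [← hj', h, norm_zero, mul_zero])
      obtain ⟨T', hT'⟩ :=
        exists_isometry_of_isometry_succ_succ (fun k => (ht k).le) hs T hT (ht 0) hj'
      obtain ⟨rfl, ⟨T₀', hT₀'⟩, hFG⟩ := ih (fun i => ht _) (fun k => hs _) T' hT'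
      exact ⟨rfl, exists_isometry_succ_of_isometry (fun k => (ht k).le) hs hμ hj' T₀' hT₀', hFG⟩

end Main

theorem stmt17_general {K F G : Type*} [NontriviallyNormedField K]
    [IsUltrametricDist K]
    [NormedAddCommGroup F] [NormedSpace K F]
    [NormedAddCommGroup G] [NormedSpace K G] [IsUltrametricDist G]
    (hF : Indecomposable' K F) (hG : Indecomposable' K G)
    (hF2 : 2 ≤ finrank K F)
    (m n : ℕ) (t : Fin m → ℝ) (s : Fin n → ℝ)
    (ht : ∀ i, 0 < t i) (hs : ∀ j, 0 < s j)
    (hiso : ∃ T : ((Fin m → K) × F) ≃ₗ[K] ((Fin n → K) × G),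
      ∀ v : (Fin m → K) × F,
        max (⨆ j, s j * ‖(T v).1 j‖) ‖(T v).2‖ =
          max (⨆ i, t i * ‖v.1 i‖) ‖v.2‖) :
    m = n ∧
    (∃ T₀ : (Fin m → K) ≃ₗ[K] (Fin n → K),
      ∀ w : Fin m → K, (⨆ j, s j * ‖T₀ w j‖) = ⨆ i, t i * ‖w i‖) ∧
    ∃ T₁ : F ≃ₗ[K] G, ∀ u : F, ‖T₁ u‖ = ‖u‖ := by
  obtain ⟨T, hT⟩ := hiso
  exact hF.exists_isometries_of_isometry_prod hF2 hG ht (fun j => (hs j).le) T hT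

theorem stmt17 {K F G : Type*} [NontriviallyNormedField K] [CompleteSpace K]
    [IsUltrametricDist K]
    [NormedAddCommGroup F] [NormedSpace K F] [IsUltrametricDist F]
    [FiniteDimensional K F]
    [NormedAddCommGroup G] [NormedSpace K G] [IsUltrametricDist G]
    [FiniteDimensional K G]
    (hKns : ¬ SphericallyComplete K)
    (hF : Indecomposable' K F) (hG : Indecomposable' K G)
    (hF2 : 2 ≤ finrank K F)
    (m n : ℕ) (t : Fin m → ℝ) (s : Fin n → ℝ)
    (ht : ∀ i, 0 < t i) (hs : ∀ j, 0 < s j)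
    (hiso : ∃ T : ((Fin m → K) × F) ≃ₗ[K] ((Fin n → K) × G),
      ∀ v : (Fin m → K) × F,
        max (⨆ j, s j * ‖(T v).1 j‖) ‖(T v).2‖ =
          max (⨆ i, t i * ‖v.1 i‖) ‖v.2‖) :
    m = n ∧
    (∃ T₀ : (Fin m → K) ≃ₗ[K] (Fin n → K),
      ∀ w : Fin m → K, (⨆ j, s j * ‖T₀ w j‖) = ⨆ i, t i * ‖w i‖) ∧
    ∃ T₁ : F ≃ₗ[K] G, ∀ u : F, ‖T₁ u‖ = ‖u‖ :=
  stmt17_general hF hG hF2 m n t s ht hs hiso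
end

section
/- Let K be a complete non-archimedean nontrivially valued field which is not spherically complete and let E be an indecomposable 4-dimensional K-normed space such that the maximal cardinality of an orthogonal subset of E is 2 (dim_{K^∨} E^∨ = 2). Then every 3-dimensional subspace F of E has maximal orthogonal subsets of cardinality exactly 2 (i.e., dim_{K^∨} F^∨ = 2, never 1). -/
open Module

/-- An indexed family of vectors is orthogonal: all vectors are nonzero and the norm of
any linear combination is the maximum of the norms of its summands. -/
def IsOrthFamily (K : Type*) {E : Type*} [NormedField K] [NormedAddCommGroup E]
    [NormedSpace K E] {m : ℕ} (f : Fin m → E) : Prop :=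
  (∀ i, f i ≠ 0) ∧ ∀ c : Fin m → K, ‖∑ i, c i • f i‖ = ⨆ i, ‖c i • f i‖

lemma iSup_fin2' (g : Fin 2 → ℝ) : (⨆ i, g i) = max (g 0) (g 1) := by
  apply le_antisymm
  · exact ciSup_le (fun i => by fin_cases i <;> simp [le_max_left, le_max_right])
  · exact max_le (le_ciSup (Finite.bddAbove_range g) 0) (le_ciSup (Finite.bddAbove_range g) 1)

section Aux

variable {K E : Type*} [NontriviallyNormedField K] [NormedAddCommGroup E] [NormedSpace K E]

lemma orthPair_isOrthFamily {u v : E} (hu : u ≠ 0) (hv : v ≠ 0)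
    (h : ∀ a b : K, ‖a • u + b • v‖ = max ‖a • u‖ ‖b • v‖) :
    IsOrthFamily K ![u, v] := by
  constructor
  · intro i; fin_cases i <;> simpa
  · intro c
    rw [Fin.sum_univ_two, iSup_fin2']
    simpa using h (c 0) (c 1)

lemma isOrthFamily_orthPair {f : Fin 2 → E} (h : IsOrthFamily K f) :
    ∀ a b : K, ‖a • f 0 + b • f 1‖ = max ‖a • f 0‖ ‖b • f 1‖ := by
  intro a b
  have := h.2 ![a, b]
  rw [Fin.sum_univ_two, iSup_fin2'] at this
  simpa using this

variable [IsUltrametricDist E]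

lemma orthPair_combo {e0 e1 : E} (h : ∀ a b : K, ‖a • e0 + b • e1‖ = max ‖a • e0‖ ‖b • e1‖)
    {a b : K} (hab : ‖b • e1‖ ≤ ‖a • e0‖) :
    ∀ x y : K, ‖x • (a • e0 + b • e1) + y • e1‖ = max ‖x • (a • e0 + b • e1)‖ ‖y • e1‖ := by
  intro x y
  have hBA : ‖(x * b) • e1‖ ≤ ‖(x * a) • e0‖ := by
    rw [mul_smul, mul_smul, norm_smul x (b • e1), norm_smul x (a • e0)]
    exact mul_le_mul_of_nonneg_left hab (norm_nonneg x)
  have hrw : x • (a • e0 + b • e1) + y • e1 = (x * a) • e0 + (x * b + y) • e1 := by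
    rw [smul_add, ← mul_smul, ← mul_smul, add_smul, add_assoc]
  have hnu : ‖x • (a • e0 + b • e1)‖ = ‖(x * a) • e0‖ := by
    rw [smul_add, ← mul_smul, ← mul_smul, h (x*a) (x*b), max_eq_left hBA]
  rw [hrw, h (x*a) (x*b + y), hnu]
  rcases le_or_gt ‖y • e1‖ ‖(x * a) • e0‖ with hc | hc
  · have h1 : ‖(x * b + y) • e1‖ ≤ ‖(x * a) • e0‖ := by
      rw [add_smul]
      exact le_trans (IsUltrametricDist.norm_add_le_max _ _) (max_le hBA hc)
    rw [max_eq_left h1, max_eq_left hc]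
  · have hlt : ‖(x * b) • e1‖ < ‖y • e1‖ := lt_of_le_of_lt hBA hc
    have h1 : ‖(x * b + y) • e1‖ = ‖y • e1‖ := by
      rw [add_smul, IsUltrametricDist.norm_add_eq_max_of_norm_ne_norm (ne_of_lt hlt)]
      exact max_eq_right hlt.le
    rw [h1, max_eq_right hc.le]

end Aux

theorem stmt19 {K E : Type*} [NontriviallyNormedField K] [CompleteSpace K]
    [IsUltrametricDist K] [NormedAddCommGroup E] [NormedSpace K E]
    [IsUltrametricDist E] [FiniteDimensional K E]
    (hKns : ¬ SphericallyComplete K)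
    (hdim : finrank K E = 4)
    (hindec : ¬ ∃ D₁ D₂ : Submodule K E, D₁ ≠ ⊥ ∧ D₂ ≠ ⊥ ∧ D₁ ⊔ D₂ = ⊤ ∧
      ∀ v₁ ∈ D₁, ∀ v₂ ∈ D₂, ‖v₁ + v₂‖ = max ‖v₁‖ ‖v₂‖)
    (horth2 : ∃ f : Fin 2 → E, IsOrthFamily K f)
    (hnot3 : ¬ ∃ f : Fin 3 → E, IsOrthFamily K f) :
    ∀ F : Submodule K E, finrank K F = 3 →
      (∃ f : Fin 2 → E, (∀ i, f i ∈ F) ∧ IsOrthFamily K f) ∧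
      ¬ ∃ f : Fin 3 → E, (∀ i, f i ∈ F) ∧ IsOrthFamily K f := by
  intro F hF3
  constructor
  · by_contra hc
    -- no orthogonal pair inside F
    have hFnp : ∀ x y : E, x ∈ F → y ∈ F → x ≠ 0 → y ≠ 0 →
        ¬ (∀ a b : K, ‖a • x + b • y‖ = max ‖a • x‖ ‖b • y‖) := by
      intro x y hx hy hx0 hy0 hp
      refine hc ⟨![x, y], ?_, orthPair_isOrthFamily hx0 hy0 hp⟩
      intro i; fin_cases i
      · exact hx
      · exact hy
    obtain ⟨e, he⟩ := horth2
    have he0 : e 0 ≠ 0 := he.1 0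
    have he1 : e 1 ≠ 0 := he.1 1
    have hpe := isOrthFamily_orthPair he
    -- e 0, e 1 are linearly independent
    have hli : LinearIndependent K ![e 0, e 1] := by
      rw [LinearIndependent.pair_iff]
      intro s t hst
      have h0 := hpe s t
      rw [hst, norm_zero] at h0
      have hs : ‖s • e 0‖ = 0 :=
        le_antisymm (by rw [h0]; exact le_max_left _ _) (norm_nonneg _)
      have ht : ‖t • e 1‖ = 0 :=
        le_antisymm (by rw [h0]; exact le_max_right _ _) (norm_nonneg _)
      constructor
      · rcases smul_eq_zero.mp (norm_eq_zero.mp hs) with h | h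
        · exact h
        · exact absurd h he0
      · rcases smul_eq_zero.mp (norm_eq_zero.mp ht) with h | h
        · exact h
        · exact absurd h he1
    set S : Submodule K E := Submodule.span K (Set.range ![e 0, e 1]) with hS
    have hSrank : finrank K S = 2 := by
      rw [hS, finrank_span_eq_card hli, Fintype.card_fin]
    -- F ⊓ S is nontrivial
    have hsum := Submodule.finrank_sup_add_finrank_inf_eq F S
    have hsup_le : finrank K ↥(F ⊔ S) ≤ 4 := hdim ▸ Submodule.finrank_le (F ⊔ S)
    have hinf_pos : F ⊓ S ≠ ⊥ := by
      intro hbot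
      rw [hbot, finrank_bot, hF3, hSrank] at hsum
      omega
    obtain ⟨u, huFS, hu0⟩ := Submodule.exists_mem_ne_zero_of_ne_bot hinf_pos
    have huF : u ∈ F := huFS.1
    have huS : u ∈ S := huFS.2
    have hrange : Set.range ![e 0, e 1] = {e 0, e 1} := by
      simp [Matrix.range_cons, Matrix.range_empty, Set.pair_comm]
    rw [hS, hrange, Submodule.mem_span_pair] at huS
    obtain ⟨a, b, hab⟩ := huS
    -- find v ∈ {e 0, e 1} orthogonal to u
    have hsym : ∀ a b : K, ‖a • e 1 + b • e 0‖ = max ‖a • e 1‖ ‖b • e 0‖ := by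
      intro a b
      rw [add_comm, hpe b a, max_comm]
    have hstep : ∃ v : E, v ≠ 0 ∧ ∀ x y : K, ‖x • u + y • v‖ = max ‖x • u‖ ‖y • v‖ := by
      rcases le_total ‖b • e 1‖ ‖a • e 0‖ with hle | hle
      · refine ⟨e 1, he1, ?_⟩
        have := orthPair_combo hpe hle
        rwa [hab] at this
      · refine ⟨e 0, he0, ?_⟩
        have := orthPair_combo hsym hle
        rwa [add_comm, hab] at this
    obtain ⟨v, hv0, hpv⟩ := hstep
    -- v ∉ F
    have hvF : v ∉ F := fun h => hFnp u v huF h hu0 hv0 hpv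
    -- key: dist(v, F) = ‖v‖
    have hkey : ∀ f ∈ F, ‖v‖ ≤ ‖v + f‖ := by
      intro f hf
      by_contra hlt
      push_neg at hlt
      have hfv : ‖f‖ = ‖v‖ := by
        by_contra hne
        have := IsUltrametricDist.norm_add_eq_max_of_norm_ne_norm (x := v) (y := f)
          (fun h => hne h.symm)
        rw [this] at hlt
        exact absurd (le_max_left ‖v‖ ‖f‖) (not_le.mpr hlt)
      have hf0 : f ≠ 0 := by
        intro h
        rw [h, add_zero] at hlt
        exact lt_irrefl _ hlt
      obtain ⟨x, y, hxy⟩ := by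
        have := hFnp f u hf huF hf0 hu0
        push_neg at this
        exact this
      have hxyle : ‖x • f + y • u‖ ≤ max ‖x • f‖ ‖y • u‖ := by
        refine le_trans (IsUltrametricDist.norm_add_le_max _ _) ?_
        exact le_refl _
      have hxylt : ‖x • f + y • u‖ < max ‖x • f‖ ‖y • u‖ := lt_of_le_of_ne hxyle hxy
      have hx0 : x ≠ 0 := by
        intro h
        rw [h, zero_smul, zero_add, norm_zero] at hxylt
        exact absurd (lt_of_lt_of_le hxylt (max_le (norm_nonneg _) le_rfl))
          (lt_irrefl _)
      -- scale by x⁻¹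
      set lam := x⁻¹ * y with hlam
      have hsc : ‖f + lam • u‖ < max ‖f‖ ‖lam • u‖ := by
        have h1 : f + lam • u = x⁻¹ • (x • f + y • u) := by
          rw [smul_add, ← mul_smul, ← mul_smul, inv_mul_cancel₀ hx0, one_smul, hlam]
        have h2 : ‖x⁻¹ • (x • f + y • u)‖ = ‖x‖⁻¹ * ‖x • f + y • u‖ := by
          rw [norm_smul, norm_inv]
        have h3 : max ‖f‖ ‖lam • u‖ = ‖x‖⁻¹ * max ‖x • f‖ ‖y • u‖ := by
          rw [mul_max_of_nonneg _ _ (inv_nonneg.mpr (norm_nonneg x))]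
          congr 1
          · rw [norm_smul, inv_mul_cancel_left₀ (norm_ne_zero_iff.mpr hx0)]
          · rw [hlam, mul_smul, norm_smul, norm_inv]
        rw [h1, h2, h3]
        exact mul_lt_mul_of_pos_left hxylt (inv_pos.mpr (norm_pos_iff.mpr hx0))
      have hfl : ‖f‖ = ‖lam • u‖ := by
        by_contra hne
        rw [IsUltrametricDist.norm_add_eq_max_of_norm_ne_norm hne] at hsc
        exact lt_irrefl _ hsc
      have hsc' : ‖f + lam • u‖ < ‖v‖ := by
        rw [← hfv]
        calc ‖f + lam • u‖ < max ‖f‖ ‖lam • u‖ := hsc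
        _ = ‖f‖ := by rw [← hfl, max_self]
      -- combine: ‖v - lam • u‖ < ‖v‖ contradicting orthogonality
      have hcomb : ‖v + (- lam) • u‖ < ‖v‖ := by
        have heq : v + (- lam) • u = (v + f) + (-(f + lam • u)) := by
          rw [neg_smul]; abel
        rw [heq]
        refine lt_of_le_of_lt (IsUltrametricDist.norm_add_le_max _ _) ?_
        rw [norm_neg]
        exact max_lt hlt hsc'
      have horth : ‖v + (- lam) • u‖ ≥ ‖v‖ := by
        have := hpv (-lam) 1
        rw [one_smul, add_comm] at this
        rw [this]
        exact le_max_right _ _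
      exact absurd hcomb (not_lt.mpr horth)
    -- full orthogonality of v with F
    have hOrthF : ∀ f ∈ F, ∀ μ : K, ‖f + μ • v‖ = max ‖f‖ ‖μ • v‖ := by
      intro f hf μ
      have hge2 : ‖μ • v‖ ≤ ‖f + μ • v‖ := by
        rcases eq_or_ne μ 0 with rfl | hμ
        · simp
        · have h1 : f + μ • v = μ • (v + μ⁻¹ • f) := by
            rw [smul_add, ← mul_smul, mul_inv_cancel₀ hμ, one_smul, add_comm]
          rw [h1, norm_smul, norm_smul]
          exact mul_le_mul_of_nonneg_left (hkey _ (F.smul_mem μ⁻¹ hf)) (norm_nonneg μ)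
      have hge1 : ‖f‖ ≤ ‖f + μ • v‖ := by
        have h1 : f = (f + μ • v) + (-(μ • v)) := by abel
        calc ‖f‖ = ‖(f + μ • v) + (-(μ • v))‖ := by rw [← h1]
        _ ≤ max ‖f + μ • v‖ ‖μ • v‖ := by
            refine le_trans (IsUltrametricDist.norm_add_le_max _ _) ?_
            rw [norm_neg]
        _ = ‖f + μ • v‖ := max_eq_left hge2
      exact le_antisymm (IsUltrametricDist.norm_add_le_max _ _) (max_le hge1 hge2)
    -- contradiction with indecomposability
    apply hindec
    refine ⟨F, Submodule.span K {v}, ?_, ?_, ?_, ?_⟩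
    · intro h
      rw [h, finrank_bot] at hF3
      omega
    · rw [Ne, Submodule.span_singleton_eq_bot]
      exact hv0
    · have hvmem : v ∈ F ⊔ Submodule.span K {v} :=
        Submodule.mem_sup_right (Submodule.mem_span_singleton_self v)
      have hlt : F < F ⊔ Submodule.span K {v} := by
        refine lt_of_le_of_ne le_sup_left ?_
        intro h
        exact hvF (h ▸ hvmem)
      have h4 : 3 < finrank K ↥(F ⊔ Submodule.span K {v}) := by
        rw [← hF3]
        exact Submodule.finrank_lt_finrank_of_lt hlt
      have h5 : finrank K ↥(F ⊔ Submodule.span K {v}) ≤ 4 :=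
        hdim ▸ Submodule.finrank_le _
      exact Submodule.eq_top_of_finrank_eq (by omega)
    · intro v₁ h1 v₂ h2
      obtain ⟨μ, rfl⟩ := Submodule.mem_span_singleton.mp h2
      exact hOrthF v₁ h1 μ
  · rintro ⟨f, hfF, hf⟩
    exact hnot3 ⟨f, hf⟩
end
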